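/- arXiv:1205.0369 — 8 statements merged into one kernel-verified Lean document; each statement's English description precedes it below -/
import Mathlib

section
/- For every integer r ≥ 1, the following identity holds in the polynomial ring ℚ[x]: the sum over all unordered increasing trees T on the label set {1,…,r} of the product ∏_{v=1}^{r} (x·h_T(v) + 1) equals (x+1) · ∏_{i=1}^{r−1} (x·r + i). -/
open scoped Classical

/-- An unordered increasing tree on the label set `{1, …, r}` (encoded as `Fin r`,
with vertex `i : Fin r` representing the label `i+1`), given by its parent function:
the root (vertex `0`, i.e. label `1`) is fixed, and every other vertex has a
father with a strictly smaller label. -/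
def IsParent {r : ℕ} (f : Fin r → Fin r) : Prop :=
  ∀ v : Fin r, if v.val = 0 then f v = v else (f v).val < v.val

/-- The hook of the vertex `v`: the set consisting of `v` together with all of its
descendants (`u` is a descendant of `v` if iterating the parent function starting
from `u` reaches `v`). -/
noncomputable def hookF {r : ℕ} (f : Fin r → Fin r) (v : Fin r) : Finset (Fin r) :=
  Finset.univ.filter fun u => ∃ n, f^[n] u = v

/-!
Generalise by adding marks: each mark `t` of a finite set carries a weight `w t` and is placed on
a vertex `j t`, and the factor of a vertex `v` becomes `1` plus the total weight (each vertex
weighing `x`, each mark `w t`) of the hook of `v`. The sum over all trees and all placements,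
multiplied by `r`, is `r ^ #marks * ∏_{i=1}^{r} (r x + i + W)`, with `W` the total mark weight;
the theorem is the case without marks, where the factor `i = r` is `r (x + 1)`.

The generalisation follows by induction on `r`. The largest vertex is a leaf whose father `k` is
arbitrary; the leaf lies exactly in the hooks of the ancestors of `k`, so deleting it and merging
its weight with the marks `P` on it into one new mark on `k` leaves every other factor unchanged.
This new mark is placed uniformly like the others, so the induction hypothesis applies, and the
sum over `P` is a binomial computation.
-/

open Finset

lemma natCast_mul_left_injective {R : Type*} [Semiring R] [IsAddTorsionFree R] {n : ℕ}
    (hn : n ≠ 0) : Function.Injective ((n : R) * ·) :=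
  fun a b h => (nsmul_right_inj hn).1 (by simpa only [nsmul_eq_mul] using h)

lemma mul_sum_powerset_mul_pow {R ι : Type*} [CommSemiring R] (a c : R) (w : ι → R)
    (s : Finset ι) :
    (a + 1) * ∑ P ∈ s.powerset, (c + ∑ t ∈ P, w t) * a ^ (#s - #P) =
      (a + 1) ^ #s * ((a + 1) * c + ∑ t ∈ s, w t) := by
  induction s using Finset.induction_on generalizing c with
  | empty => simp
  | insert b s hb ih =>
    have without_b : ∀ P ∈ s.powerset, (c + ∑ t ∈ P, w t) * a ^ (#(insert b s) - #P) =
        a * ((c + ∑ t ∈ P, w t) * a ^ (#s - #P)) := by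
      intro P hP
      rw [card_insert_of_notMem hb, Nat.sub_add_comm (card_le_card (mem_powerset.1 hP)),
        pow_succ]
      ring
    have with_b : ∀ P ∈ s.powerset,
        (c + ∑ t ∈ insert b P, w t) * a ^ (#(insert b s) - #(insert b P)) =
          (c + w b + ∑ t ∈ P, w t) * a ^ (#s - #P) := by
      intro P hP
      have hbP : b ∉ P := fun h => hb (mem_powerset.1 hP h)
      rw [card_insert_of_notMem hb, card_insert_of_notMem hbP, sum_insert hbP,
        Nat.add_sub_add_right, add_assoc]
    rw [sum_powerset_insert hb, sum_congr rfl without_b, sum_congr rfl with_b, ← mul_sum,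
      mul_add, mul_left_comm, ih, ih, card_insert_of_notMem hb, sum_insert hb]
    ring

lemma sum_fun_option {M α β : Type*} [AddCommMonoid M] [Fintype α] [Fintype β]
    [DecidableEq α] (f : (Option α → β) → M) :
    ∑ J, f J = ∑ k, ∑ j : α → β, f (fun s => s.elim k j) := by
  rw [← Equiv.piOptionEquivProd.symm.sum_comp, Fintype.sum_prod_type]
  refine sum_congr rfl fun k _ => sum_congr rfl fun j _ => congrArg f ?_
  ext (_ | _) <;> rfl

section LastOn

variable {ι : Type*} {r : ℕ}

noncomputable def lastOn (P : Finset ι) (j : {t // t ∉ P} → Fin r) (t : ι) : Fin (r + 1) :=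
  if h : t ∈ P then Fin.last r else (j ⟨t, h⟩).castSucc

lemma lastOn_eq_last_iff {P : Finset ι} {j : {t // t ∉ P} → Fin r} {t : ι} :
    lastOn P j t = Fin.last r ↔ t ∈ P := by
  by_cases h : t ∈ P <;> simp [lastOn, h, (Fin.castSucc_lt_last _).ne]

@[simp] lemma lastOn_coe (P : Finset ι) (j : {t // t ∉ P} → Fin r) (t : {t // t ∉ P}) :
    lastOn P j t = (j t).castSucc := by
  simp [lastOn, t.2]

lemma sum_fun_fin_succ [Fintype ι] [DecidableEq ι] {M : Type*} [AddCommMonoid M]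
    (F : (ι → Fin (r + 1)) → M) :
    ∑ j, F j = ∑ P : Finset ι, ∑ j : {t // t ∉ P} → Fin r, F (lastOn P j) := by
  rw [← sum_fiberwise univ (fun j : ι → Fin (r + 1) => univ.filter (j · = Fin.last r)) F]
  refine sum_congr rfl fun P _ => ?_
  symm
  refine sum_bij (fun j _ => lastOn P j) ?_ ?_ ?_ fun _ _ => rfl
  · intro j _
    simp [Finset.ext_iff, lastOn_eq_last_iff]
  · intro a _ b _ h
    funext t
    simpa [lastOn, t.2] using congrFun h t
  · intro j hj
    simp only [mem_filter, mem_univ, true_and, Finset.ext_iff] at hj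
    refine ⟨fun t => (j t).castLT (Fin.val_lt_last fun h => t.2 ((hj t).1 h)), mem_univ _, ?_⟩
    funext t
    by_cases h : t ∈ P
    · simpa [lastOn, h] using ((hj t).2 h).symm
    · simp [lastOn, h]

end LastOn

namespace IncreasingTree

variable {r : ℕ}

lemma mem_hookF {f : Fin r → Fin r} {u v : Fin r} : u ∈ hookF f v ↔ ∃ n, f^[n] u = v := by
  simp [hookF]

lemma IsParent.val_apply_le {f : Fin r → Fin r} (hf : IsParent f) (v : Fin r) :
    (f v).val ≤ v.val := by
  have hv := hf v
  split_ifs at hv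
  · rw [hv]
  · exact hv.le

lemma IsParent.val_apply_lt {f : Fin r → Fin r} (hf : IsParent f) {v : Fin r} (hv : v.val ≠ 0) :
    (f v).val < v.val := by
  simpa [hv] using hf v

def attachLeaf (g : Fin r → Fin r) (k : Fin r) : Fin (r + 1) → Fin (r + 1) :=
  Fin.lastCases k.castSucc fun u => (g u).castSucc

@[simp] lemma attachLeaf_last (g : Fin r → Fin r) (k : Fin r) :
    attachLeaf g k (Fin.last r) = k.castSucc := by
  simp [attachLeaf]

@[simp] lemma attachLeaf_castSucc (g : Fin r → Fin r) (k u : Fin r) :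
    attachLeaf g k u.castSucc = (g u).castSucc := by
  simp [attachLeaf]

lemma iterate_attachLeaf_castSucc (g : Fin r → Fin r) (k u : Fin r) (n : ℕ) :
    (attachLeaf g k)^[n] u.castSucc = (g^[n] u).castSucc := by
  induction n generalizing u with
  | zero => rfl
  | succ n ih => simp only [Function.iterate_succ_apply, attachLeaf_castSucc, ih]

lemma isParent_attachLeaf {g : Fin r → Fin r} (hg : IsParent g) (k : Fin r) :
    IsParent (attachLeaf g k) := by
  intro v
  induction v using Fin.lastCases with
  | last => simp [(Fin.pos k).ne']
  | cast u => simpa [Fin.ext_iff] using hg u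

lemma isParent_restrict {f : Fin (r + 1) → Fin (r + 1)} (hf : IsParent f) :
    IsParent fun v : Fin r =>
      (f v.castSucc).castLT ((IsParent.val_apply_le hf v.castSucc).trans_lt v.isLt) := by
  intro v
  simpa [Fin.ext_iff] using hf v.castSucc

/-- Removing the largest vertex, which is always a leaf. -/
def succEquiv (hr : 0 < r) :
    {f : Fin (r + 1) → Fin (r + 1) // IsParent f} ≃ {g : Fin r → Fin r // IsParent g} × Fin r where
  toFun T := (⟨_, isParent_restrict T.2⟩,
    (T.1 (Fin.last r)).castLT (IsParent.val_apply_lt T.2 (by simpa using hr.ne')))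
  invFun p := ⟨attachLeaf p.1.1 p.2, isParent_attachLeaf p.1.2 p.2⟩
  left_inv T := by
    ext v : 2
    induction v using Fin.lastCases <;> simp
  right_inv p := by
    ext <;> simp

lemma sum_succ {M : Type*} [AddCommMonoid M] (hr : 0 < r)
    (F : {f : Fin (r + 1) → Fin (r + 1) // IsParent f} → M) :
    ∑ T, F T = ∑ G : {g : Fin r → Fin r // IsParent g}, ∑ k,
      F ⟨attachLeaf G.1 k, isParent_attachLeaf G.2 k⟩ := by
  rw [← (succEquiv hr).symm.sum_comp, Fintype.sum_prod_type]
  rfl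

lemma castSucc_mem_hookF_attachLeaf {g : Fin r → Fin r} {k u v : Fin r} :
    u.castSucc ∈ hookF (attachLeaf g k) v.castSucc ↔ u ∈ hookF g v := by
  simp only [mem_hookF, iterate_attachLeaf_castSucc, Fin.castSucc_inj]

lemma last_mem_hookF_attachLeaf {g : Fin r → Fin r} {k v : Fin r} :
    Fin.last r ∈ hookF (attachLeaf g k) v.castSucc ↔ k ∈ hookF g v := by
  simp only [mem_hookF]
  constructor
  · rintro ⟨_ | n, hn⟩
    · exact absurd hn (Fin.castSucc_lt_last v).ne'
    · rw [Function.iterate_succ_apply, attachLeaf_last, iterate_attachLeaf_castSucc,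
        Fin.castSucc_inj] at hn
      exact ⟨n, hn⟩
  · rintro ⟨n, hn⟩
    exact ⟨n + 1, by rw [Function.iterate_succ_apply, attachLeaf_last,
      iterate_attachLeaf_castSucc, hn]⟩

lemma hookF_attachLeaf_last (g : Fin r → Fin r) (k : Fin r) :
    hookF (attachLeaf g k) (Fin.last r) = {Fin.last r} := by
  ext u
  induction u using Fin.lastCases with
  | last => simpa using mem_hookF.2 ⟨0, rfl⟩
  | cast u =>
    simp only [mem_hookF, iterate_attachLeaf_castSucc, mem_singleton,
      (Fin.castSucc_lt_last _).ne, exists_const]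

lemma sum_hookF_attachLeaf_castSucc {M : Type*} [AddCommMonoid M] (g : Fin r → Fin r)
    (k v : Fin r) (c : Fin (r + 1) → M) :
    ∑ u ∈ hookF (attachLeaf g k) v.castSucc, c u =
      ∑ u ∈ hookF g v, (c u.castSucc + if u = k then c (Fin.last r) else 0) := by
  rw [sum_add_distrib, sum_ite_eq', ← Fintype.sum_ite_mem, Fin.sum_univ_castSucc]
  simp only [castSucc_mem_hookF_attachLeaf, last_mem_hookF_attachLeaf, Fintype.sum_ite_mem]

variable {R : Type*} [CommSemiring R] {ι : Type*} [Fintype ι]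

noncomputable def markedWeight (x : R) (w : ι → R) (j : ι → Fin r) (u : Fin r) : R :=
  x + ∑ t with j t = u, w t

noncomputable def markedHookSum [DecidableEq ι] (r : ℕ) (x : R) (w : ι → R) : R :=
  ∑ T : {f : Fin r → Fin r // IsParent f}, ∑ j : ι → Fin r,
    ∏ v, (1 + ∑ u ∈ hookF T.1 v, markedWeight x w j u)

/-- When the largest leaf, carrying the marks `P`, is removed, its weight `x + ∑ t ∈ P, w t`
becomes a new mark `none`, to be placed on its father. -/
noncomputable def mergedWeights (x : R) (w : ι → R) (P : Finset ι) :
    Option {t // t ∉ P} → R :=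
  fun s => s.elim (x + ∑ t ∈ P, w t) fun t => w t

lemma sum_mergedWeights [DecidableEq ι] (x : R) (w : ι → R) (P : Finset ι) :
    ∑ s, mergedWeights x w P s = x + ∑ t, w t := by
  simp only [Fintype.sum_option, mergedWeights, Option.elim_none, Option.elim_some]
  rw [add_assoc, ← sum_add_sum_compl P w, sum_subtype Pᶜ fun _ => mem_compl]

lemma markedWeight_lastOn_last (x : R) (w : ι → R) (P : Finset ι) (j : {t // t ∉ P} → Fin r) :
    markedWeight x w (lastOn P j) (Fin.last r) = x + ∑ t ∈ P, w t := by
  simp only [markedWeight, lastOn_eq_last_iff, filter_univ_mem]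

lemma markedWeight_lastOn_castSucc [DecidableEq ι] (x : R) (w : ι → R) (P : Finset ι)
    (j : {t // t ∉ P} → Fin r) (k u : Fin r) :
    markedWeight x w (lastOn P j) u.castSucc +
        (if u = k then markedWeight x w (lastOn P j) (Fin.last r) else 0) =
      markedWeight x (mergedWeights x w P) (fun s => s.elim k j) u := by
  have marks_off_P : ∑ t with lastOn P j t = u.castSucc, w t =
      ∑ t : {t // t ∉ P}, if j t = u then w t else 0 := by
    rw [sum_filter, ← Fintype.sum_subtype_add_sum_subtype (· ∈ P)]
    simp [lastOn_eq_last_iff.2, (Fin.castSucc_lt_last u).ne']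
  rw [markedWeight_lastOn_last]
  simp only [markedWeight, marks_off_P]
  rw [sum_filter, Fintype.sum_option]
  simp only [mergedWeights, Option.elim_none, Option.elim_some, eq_comm (a := k)]
  exact (add_assoc _ _ _).trans (congrArg (x + ·) (add_comm _ _))

lemma prod_attachLeaf_lastOn [DecidableEq ι] (x : R) (w : ι → R) (g : Fin r → Fin r)
    (k : Fin r) (P : Finset ι) (j : {t // t ∉ P} → Fin r) :
    ∏ v, (1 + ∑ u ∈ hookF (attachLeaf g k) v, markedWeight x w (lastOn P j) u) =
      (1 + (x + ∑ t ∈ P, w t)) *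
        ∏ v, (1 + ∑ u ∈ hookF g v,
          markedWeight x (mergedWeights x w P) (fun s => s.elim k j) u) := by
  rw [Fin.prod_univ_castSucc, hookF_attachLeaf_last, sum_singleton, markedWeight_lastOn_last,
    mul_comm]
  simp only [sum_hookF_attachLeaf_castSucc, markedWeight_lastOn_castSucc]

lemma markedHookSum_succ [DecidableEq ι] (hr : 0 < r) (x : R) (w : ι → R) :
    markedHookSum (r + 1) x w =
      ∑ P : Finset ι, (1 + (x + ∑ t ∈ P, w t)) * markedHookSum r x (mergedWeights x w P) := by
  simp only [markedHookSum, sum_succ hr, sum_fun_fin_succ (r := r), prod_attachLeaf_lastOn,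
    mul_sum]
  conv_rhs => enter [2, P, 2, G]; rw [sum_fun_option]
  exact (sum_congr rfl fun G _ => sum_comm).trans sum_comm

lemma markedHookSum_one [DecidableEq ι] (x : R) (w : ι → R) :
    markedHookSum 1 x w = 1 + (x + ∑ t, w t) := by
  have root : IsParent (id : Fin 1 → Fin 1) := fun v => by simp [Fin.fin_one_eq_zero v]
  have hook_root (f : Fin 1 → Fin 1) : hookF f 0 = univ :=
    eq_univ_of_forall fun u => mem_hookF.2 ⟨0, Subsingleton.elim _ _⟩
  rw [markedHookSum, Fintype.sum_subsingleton _ ⟨id, root⟩, Fintype.sum_subsingleton _ 0]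
  simp [hook_root, markedWeight, Subsingleton.elim _ (0 : Fin 1)]

theorem natCast_mul_markedHookSum [IsAddTorsionFree R] [DecidableEq ι] (hr : 0 < r) (x : R)
    (w : ι → R) :
    (r : R) * markedHookSum r x w =
      (r : R) ^ Fintype.card ι * ∏ i ∈ Icc 1 r, (r * x + i + ∑ t, w t) := by
  induction r, hr using Nat.le_induction generalizing ι with
  | base =>
    simp only [Nat.cast_one, one_mul, markedHookSum_one, one_pow, Icc_self, prod_singleton]
    ring
  | succ r hr ih =>
    set Q := ∏ i ∈ Icc 1 r, ((r + 1 : ℕ) * x + i + ∑ t, w t)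
    have merged (P : Finset ι) :
        markedHookSum r x (mergedWeights x w P) = (r : R) ^ (Fintype.card ι - #P) * Q := by
      refine natCast_mul_left_injective (by omega) ((ih _).trans ?_)
      rw [Fintype.card_option, Fintype.card_subtype_compl, Fintype.card_coe, sum_mergedWeights,
        pow_succ, mul_comm _ (r : R), mul_assoc]
      congr 2
      exact prod_congr rfl fun i _ => by push_cast; ring
    calc ((r + 1 : ℕ) : R) * markedHookSum (r + 1) x w
        = (r + 1) * (∑ P ∈ univ.powerset,
            (1 + x + ∑ t ∈ P, w t) * r ^ (#(univ : Finset ι) - #P)) * Q := by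
          simp only [markedHookSum_succ (Nat.succ_le_iff.1 hr), merged, powerset_univ, card_univ,
            add_assoc, mul_assoc, sum_mul, Nat.cast_succ]
      _ = (r + 1) ^ Fintype.card ι * ((r + 1) * (1 + x) + ∑ t, w t) * Q := by
          rw [mul_sum_powerset_mul_pow, card_univ]
      _ = ((r + 1 : ℕ) : R) ^ Fintype.card ι *
            ∏ i ∈ Icc 1 (r + 1), ((r + 1 : ℕ) * x + i + ∑ t, w t) := by
          rw [prod_Icc_succ_top (by omega)]
          simp only [Q]
          push_cast
          ring

end IncreasingTree

open Polynomial IncreasingTree in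
/-- For `r ≥ 1`, the sum over all unordered increasing trees `T` on `{1, …, r}` of
`∏_{v=1}^{r} (x · h_T(v) + 1)` equals `(x+1) · ∏_{i=1}^{r−1} (x·r + i)`, in `ℚ[x]`. -/
theorem stmt1 (r : ℕ) (hr : 1 ≤ r) :
    ∑ T : {f : Fin r → Fin r // IsParent f},
        ∏ v : Fin r, (Polynomial.X * ((hookF T.val v).card : Polynomial ℚ) + 1)
      = (Polynomial.X + 1) *
          ∏ i ∈ Finset.Icc 1 (r - 1), ((r : Polynomial ℚ) * Polynomial.X + (i : Polynomial ℚ)) := by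
  have unmarked : markedHookSum r (X : ℚ[X]) (fun _ : Empty => 0) =
      ∑ T : {f : Fin r → Fin r // IsParent f}, ∏ v, (X * ((hookF T.val v).card : ℚ[X]) + 1) := by
    simp [markedHookSum, markedWeight, add_comm, mul_comm]
  have key := natCast_mul_markedHookSum hr (X : ℚ[X]) fun _ : Empty => 0
  obtain ⟨s, rfl⟩ : ∃ s, r = s + 1 := ⟨r - 1, by omega⟩
  refine natCast_mul_left_injective (R := ℚ[X]) (n := s + 1) (by omega) ?_
  dsimp only
  rw [← unmarked, key, prod_Icc_succ_top (by omega)]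
  simp only [Nat.cast_add, Nat.cast_one, Fintype.card_eq_zero, pow_zero, univ_eq_empty,
    sum_const_zero, add_zero, one_mul, add_tsub_cancel_right]
  ring
end

section
/- Let r ≥ 2 and let k_1, …, k_r be variables with K = k_1 + ⋯ + k_r. Then the sum over all unordered increasing trees T on the label set {1,…,r} of the product ∏_{v=2}^{r} k_{f(v)} · (Σ_{u ∈ 𝔥_T(v)} k_u) equals k_1 k_2 ⋯ k_r · K^{r−2}, as an identity in ℚ[k_1,…,k_r]. -/
open scoped Classical

/-! Give the hook sums weights `x` of their own, independent of the parent weights `k`.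
The largest vertex `m + 1` is a leaf hanging from some `q`; deleting it leaves a tree on
`m + 1` vertices in which `q` carries the extra weight `x (m + 1)`, since `m + 1` lies exactly in
the hooks of the ancestors of `q`. Along this recursion the sum over `q` telescopes, and the
tree sum becomes a product of linear forms `(k₀ + ⋯ + k_v) x_v + k_v (x_{v+1} + ⋯ + x_{m+1})`,
each of which equals `k_v K` at `x = k`. -/

open Finset

section ExtendLeaf

variable {m : ℕ} (f : Fin (m + 1) → Fin (m + 1)) (q : Fin (m + 1))

def extendLeaf : Fin (m + 2) → Fin (m + 2) :=
  Fin.lastCases q.castSucc fun v => (f v).castSucc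

@[simp]
lemma extendLeaf_castSucc (v : Fin (m + 1)) : extendLeaf f q v.castSucc = (f v).castSucc := by
  simp [extendLeaf]

@[simp]
lemma extendLeaf_last : extendLeaf f q (Fin.last (m + 1)) = q.castSucc := by
  simp [extendLeaf]

lemma extendLeaf_ne_last (v : Fin (m + 2)) : extendLeaf f q v ≠ Fin.last (m + 1) := by
  cases v using Fin.lastCases <;> simp [Fin.castSucc_ne_last]

lemma isParent_extendLeaf {f} (hf : IsParent f) (q : Fin (m + 1)) : IsParent (extendLeaf f q) := by
  intro v
  cases v using Fin.lastCases with
  | last => simpa using q.isLt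
  | cast v => simpa [Fin.castSucc_inj] using hf v

lemma extendLeaf_iterate_castSucc (n : ℕ) (u : Fin (m + 1)) :
    (extendLeaf f q)^[n] u.castSucc = (f^[n] u).castSucc :=
  (Function.Semiconj.iterate_right (fun v => (extendLeaf_castSucc f q v).symm) n u).symm

lemma hookF_extendLeaf_last : hookF (extendLeaf f q) (Fin.last (m + 1)) = {Fin.last (m + 1)} := by
  ext u
  simp only [hookF, mem_filter, mem_univ, true_and, mem_singleton]
  constructor
  · rintro ⟨_ | n, hn⟩
    · exact hn
    · exact absurd hn (by rw [Function.iterate_succ_apply']; exact extendLeaf_ne_last f q _)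
  · rintro rfl
    exact ⟨0, rfl⟩

lemma castSucc_mem_hookF_extendLeaf (u v : Fin (m + 1)) :
    u.castSucc ∈ hookF (extendLeaf f q) v.castSucc ↔ u ∈ hookF f v := by
  simp [hookF, extendLeaf_iterate_castSucc]

lemma last_mem_hookF_extendLeaf (v : Fin (m + 1)) :
    Fin.last (m + 1) ∈ hookF (extendLeaf f q) v.castSucc ↔ q ∈ hookF f v := by
  simp only [hookF, mem_filter, mem_univ, true_and]
  constructor
  · rintro ⟨_ | n, hn⟩
    · exact absurd hn (Fin.castSucc_ne_last v).symm
    · rw [Function.iterate_succ_apply, extendLeaf_last, extendLeaf_iterate_castSucc] at hn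
      exact ⟨n, Fin.castSucc_injective _ hn⟩
  · rintro ⟨n, hn⟩
    exact ⟨n + 1, by
      rw [Function.iterate_succ_apply, extendLeaf_last, extendLeaf_iterate_castSucc, hn]⟩

lemma sum_hookF_extendLeaf_castSucc {A : Type*} [AddCommMonoid A] (x : ℕ → A)
    (v : Fin (m + 1)) :
    ∑ u ∈ hookF (extendLeaf f q) v.castSucc, x u
      = ∑ u ∈ hookF f v, x u + if q ∈ hookF f v then x (m + 1) else 0 := by
  rw [← Fintype.sum_ite_mem, ← Fintype.sum_ite_mem (hookF f v), Fin.sum_univ_castSucc]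
  simp only [castSucc_mem_hookF_extendLeaf, last_mem_hookF_extendLeaf, Fin.val_castSucc,
    Fin.val_last]

end ExtendLeaf

section TreeSum

variable {A : Type*} [CommSemiring A]

-- Weights are indexed by `ℕ`, so the same `k` and `x` serve trees of every size.
noncomputable def treeWeight {n : ℕ} (k x : ℕ → A) (f : Fin n → Fin n) : A :=
  ∏ v ∈ univ.filter (fun v : Fin n => v.val ≠ 0), k (f v) * ∑ u ∈ hookF f v, x u

noncomputable def treeSum (n : ℕ) (k x : ℕ → A) : A :=
  ∑ T : {f : Fin n → Fin n // IsParent f}, treeWeight k x T.val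

lemma treeWeight_extendLeaf {m : ℕ} (k x : ℕ → A) (f : Fin (m + 1) → Fin (m + 1))
    (q : Fin (m + 1)) :
    treeWeight k x (extendLeaf f q)
      = k q * x (m + 1) * treeWeight k (fun j => x j + if j = q then x (m + 1) else 0) f := by
  simp only [treeWeight, prod_filter, Fin.prod_univ_castSucc, extendLeaf_castSucc,
    extendLeaf_last, hookF_extendLeaf_last, sum_hookF_extendLeaf_castSucc, sum_add_distrib]
  simp [Fin.val_inj, sum_ite_eq', mul_comm]

lemma IsParent.val_le {n : ℕ} {f : Fin n → Fin n} (hf : IsParent f) (v : Fin n) :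
    (f v).val ≤ v.val := by
  have := hf v
  split_ifs at this with h
  · rw [this]
  · exact this.le

lemma IsParent.ne_last {m : ℕ} {f : Fin (m + 2) → Fin (m + 2)} (hf : IsParent f)
    (v : Fin (m + 2)) : f v ≠ Fin.last (m + 1) := by
  intro h
  cases v using Fin.lastCases with
  | last => simpa [h] using hf (Fin.last (m + 1))
  | cast v => simpa [h] using (hf.val_le v.castSucc).trans_lt v.isLt

lemma extendLeaf_bijective (m : ℕ) :
    Function.Bijective fun p : {f : Fin (m + 1) → Fin (m + 1) // IsParent f} × Fin (m + 1) =>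
      (⟨extendLeaf p.1.val p.2, isParent_extendLeaf p.1.2 p.2⟩ :
        {f : Fin (m + 2) → Fin (m + 2) // IsParent f}) := by
  constructor
  · rintro ⟨⟨f, _⟩, q⟩ ⟨⟨f', _⟩, q'⟩ h
    have h := congrArg Subtype.val h
    simp only at h
    have hf : f = f' := funext fun v => by simpa using congrFun h v.castSucc
    have hq : q = q' := by simpa using congrFun h (Fin.last (m + 1))
    subst hf hq
    rfl
  · rintro ⟨g, hg⟩
    refine ⟨⟨⟨fun v => (g v.castSucc).castPred (hg.ne_last _), fun v => ?_⟩,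
      (g (Fin.last (m + 1))).castPred (hg.ne_last _)⟩, ?_⟩
    · simpa [Fin.castPred_eq_iff_eq_castSucc] using hg v.castSucc
    · ext v : 2
      cases v using Fin.lastCases <;> simp

lemma treeSum_one (k x : ℕ → A) : treeSum 1 k x = 1 := by
  have hid : IsParent (id : Fin 1 → Fin 1) := fun v => by simp
  have : Unique {f : Fin 1 → Fin 1 // IsParent f} :=
    ⟨⟨⟨id, hid⟩⟩, fun _ => Subsingleton.elim _ _⟩
  simp [treeSum, treeWeight]

lemma treeSum_add_two_eq_sum (m : ℕ) (k x : ℕ → A) :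
    treeSum (m + 2) k x
      = x (m + 1) * ∑ q : Fin (m + 1), k q * treeSum (m + 1) k
          (fun j => x j + if j = q then x (m + 1) else 0) := by
  rw [treeSum, ← (extendLeaf_bijective m).sum_comp, Fintype.sum_prod_type, sum_comm, mul_sum]
  simp only [treeWeight_extendLeaf, treeSum, mul_sum]
  refine sum_congr rfl fun q _ => sum_congr rfl fun T _ => by ring

lemma sum_mul_prod_telescope (k a : ℕ → A) (t : A) (s : Finset ℕ) (n : ℕ) :
    ∑ q ∈ range n, k q * ∏ v ∈ s,
        (a v + t * if v < q then k v else if v = q then ∑ i ∈ range (q + 1), k i else 0)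
      = (∑ i ∈ range n, k i) * ∏ v ∈ s, (a v + t * if v < n then k v else 0) := by
  induction n with
  | zero => simp
  | succ n ih =>
    have split_off (d : A) :
        ∏ v ∈ s, (a v + t * if v < n then k v else if v = n then d else 0)
          = (if n ∈ s then a n + t * d else 1) *
              ∏ v ∈ s.erase n, (a v + t * if v < n then k v else 0) := by
      have rest : ∏ v ∈ s.erase n, (a v + t * if v < n then k v else if v = n then d else 0)
          = ∏ v ∈ s.erase n, (a v + t * if v < n then k v else 0) :=
        prod_congr rfl fun v hv => by simp [ne_of_mem_erase hv]
      split_ifs with hn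
      · rw [← mul_prod_erase s _ hn, rest]
        simp
      · rw [← rest, erase_eq_of_notMem hn, one_mul]
    have h0 := split_off 0
    have h1 : ∏ v ∈ s, (a v + t * if v < n + 1 then k v else 0)
        = ∏ v ∈ s, (a v + t * if v < n then k v else if v = n then k n else 0) :=
      prod_congr rfl fun v _ => by
        rcases lt_trichotomy v n with h | rfl | h
        · simp [h, h.trans (Nat.lt_succ_self n)]
        · simp
        · simp [h.ne', h.not_gt, show ¬ v < n + 1 by omega]
    simp only [ite_self] at h0
    rw [sum_range_succ, ih, sum_range_succ, h0, split_off, h1, split_off]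
    split_ifs <;> ring

lemma factor_add_ite_eq (k x : ℕ → A) (t : A) {N q : ℕ} (hq : q < N) (v : ℕ) :
    (∑ i ∈ range (v + 1), k i) * (x v + if v = q then t else 0)
        + k v * ∑ u ∈ Ico (v + 1) N, (x u + if u = q then t else 0)
      = (∑ i ∈ range (v + 1), k i) * x v + k v * ∑ u ∈ Ico (v + 1) N, x u
        + t * if v < q then k v else if v = q then ∑ i ∈ range (q + 1), k i else 0 := by
  rw [sum_add_distrib, sum_ite_eq']
  rcases lt_trichotomy v q with h | rfl | h
  · simp [h, h.ne, show q ∈ Ico (v + 1) N by simp; omega]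
    ring
  · simp
    ring
  · simp [h.ne', h.not_gt, show q ∉ Ico (v + 1) N by simp; omega]

lemma treeSum_add_two_eq_prod (m : ℕ) (k x : ℕ → A) :
    treeSum (m + 2) k x = k 0 * x (m + 1) * ∏ v ∈ Ico 1 (m + 1),
      ((∑ i ∈ range (v + 1), k i) * x v + k v * ∑ u ∈ Ico (v + 1) (m + 2), x u) := by
  induction m generalizing x with
  | zero => simp [treeSum_add_two_eq_sum, treeSum_one, mul_comm]
  | succ m ih =>
    set t := x (m + 2)
    set a : ℕ → A := fun v =>
      (∑ i ∈ range (v + 1), k i) * x v + k v * ∑ u ∈ Ico (v + 1) (m + 2), x u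
    calc treeSum (m + 3) k x
        = t * ∑ q ∈ range (m + 2), k q * (k 0 * (x (m + 1) + if m + 1 = q then t else 0) *
            ∏ v ∈ Ico 1 (m + 1), (a v + t *
              if v < q then k v else if v = q then ∑ i ∈ range (q + 1), k i else 0)) := by
          rw [treeSum_add_two_eq_sum, Fin.sum_univ_eq_sum_range
            (fun q => k q * treeSum (m + 2) k fun j => x j + if j = q then t else 0)]
          refine congrArg _ (sum_congr rfl fun q hq => ?_)
          rw [ih]
          simp only [factor_add_ite_eq k x t (mem_range.mp hq), a]
      _ = t * (k 0 * x (m + 1) * ∑ q ∈ range (m + 1), k q * ∏ v ∈ Ico 1 (m + 1), (a v + t *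
              if v < q then k v else if v = q then ∑ i ∈ range (q + 1), k i else 0)
            + k (m + 1) * (k 0 * (x (m + 1) + t) * ∏ v ∈ Ico 1 (m + 1), (a v + t * k v))) := by
          rw [sum_range_succ, mul_sum]
          congr 2
          · refine sum_congr rfl fun q hq => ?_
            rw [if_neg (mem_range.mp hq).ne']
            ring
          · rw [if_pos rfl]
            congr 1
            refine congrArg₂ _ rfl (prod_congr rfl fun v hv => ?_)
            simp [(mem_Ico.mp hv).2]
      _ = k 0 * t * (((∑ i ∈ range (m + 2), k i) * x (m + 1) + k (m + 1) * t) *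
            ∏ v ∈ Ico 1 (m + 1), (a v + t * k v)) := by
          rw [sum_mul_prod_telescope, prod_congr rfl fun v hv => by rw [if_pos (mem_Ico.mp hv).2],
            sum_range_succ _ (m + 1)]
          ring
      _ = _ := by
          rw [prod_Ico_succ_top (b := m + 1) (by omega), mul_comm _ (∏ v ∈ Ico 1 (m + 1), _)]
          congr 2
          · refine prod_congr rfl fun v hv => ?_
            rw [sum_Ico_succ_top (by simp at hv; omega)]
            ring
          · simp [t]

lemma treeSum_add_two_self (m : ℕ) (k : ℕ → A) :
    treeSum (m + 2) k k = (∏ i ∈ range (m + 2), k i) * (∑ i ∈ range (m + 2), k i) ^ m := by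
  have factor (v : ℕ) (hv : v ∈ Ico 1 (m + 1)) :
      (∑ i ∈ range (v + 1), k i) * k v + k v * ∑ u ∈ Ico (v + 1) (m + 2), k u
        = k v * ∑ i ∈ range (m + 2), k i := by
    rw [range_eq_Ico, range_eq_Ico, ← sum_Ico_consecutive k (Nat.zero_le (v + 1))
      (by simp at hv; omega : v + 1 ≤ m + 2)]
    ring
  rw [treeSum_add_two_eq_prod, prod_congr rfl factor, prod_mul_distrib, prod_const, Nat.card_Ico,
    Nat.add_sub_cancel, prod_range_succ _ (m + 1), prod_range_eq_mul_Ico _ (Nat.succ_pos m)]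
  ring

end TreeSum

/-- For `r ≥ 2`, the sum over all unordered increasing trees `T` on `{1, …, r}` of the
product `∏_{v=2}^{r} k_{f(v)} · (Σ_{u ∈ 𝔥_T(v)} k_u)` equals `k_1 ⋯ k_r · K^{r−2}`
where `K = k_1 + ⋯ + k_r`, as an identity in `ℚ[k_1, …, k_r]`. -/
theorem stmt3 (r : ℕ) (hr : 2 ≤ r) :
    ∑ T : {f : Fin r → Fin r // IsParent f},
        ∏ v ∈ Finset.univ.filter (fun v : Fin r => v.val ≠ 0),
          MvPolynomial.X (T.val v) *
            (∑ u ∈ hookF T.val v, (MvPolynomial.X u : MvPolynomial (Fin r) ℚ))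
      = (∏ i : Fin r, MvPolynomial.X i) * (∑ i : Fin r, MvPolynomial.X i) ^ (r - 2) := by
  obtain ⟨m, rfl⟩ := Nat.exists_eq_add_of_le' hr
  set k : ℕ → MvPolynomial (Fin (m + 2)) ℚ :=
    fun i => if h : i < m + 2 then MvPolynomial.X ⟨i, h⟩ else 0
  have hk (i : Fin (m + 2)) : k i = MvPolynomial.X i := dif_pos i.isLt
  have h := treeSum_add_two_self m k
  rw [← Fin.prod_univ_eq_prod_range, ← Fin.sum_univ_eq_sum_range] at h
  simpa only [treeSum, treeWeight, hk, Nat.add_sub_cancel] using h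
end

section
/- Let V be a finite nonempty set of positive integers and let T be an unordered increasing tree with label set V. Define the map φ from Cayley trees with vertex set V to unordered increasing trees with label set V recursively: given a Cayley tree U, let ℓ = min V; if |V| = 1 then φ(U) is the single-vertex tree labelled ℓ; otherwise remove vertex ℓ and all incident edges from U, obtaining connected components U_1, U_2, …, and let φ(U) be the increasing tree with root labelled ℓ whose root's subtrees are φ(U_1), φ(U_2), …. Then the sum over all Cayley trees U with vertex set V satisfying φ(U) = T of the monomial ∏_{v ∈ V} k_v^{d_v(U)} equals ∏_{v ∈ V, v ≠ min V} k_{f(v)} · (Σ_{u ∈ 𝔥_T(v)} k_u), as an identity in ℚ[(k_v)_{v∈V}]. -/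
open scoped Classical

/-- The root label of a tree with label set `V`, namely `min V` (junk value `0` if `V = ∅`). -/
def rootOf (V : Finset ℕ) : ℕ := V.min.untopD 0

/-- An unordered increasing tree with label set `V`, encoded by a (total) parent function
`f : ℕ → ℕ`: every non-root vertex `v ∈ V` has a father `f v ∈ V` with `f v < v`;
as a normalization, `f` is the identity on the root and outside `V`. -/
def IsIncTree (V : Finset ℕ) (f : ℕ → ℕ) : Prop :=
  (∀ v ∈ V, if v = rootOf V then f v = v else f v ∈ V ∧ f v < v) ∧ ∀ v, v ∉ V → f v = v

/-- The hook of a vertex `v` in the tree with label set `V` and parent function `f`: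
the set of `u ∈ V` consisting of `v` and its descendants (`u` is a descendant of `v` if
iterating `f` starting from `u` reaches `v`). -/
noncomputable def hookN (V : Finset ℕ) (f : ℕ → ℕ) (v : ℕ) : Finset ℕ :=
  V.filter fun u => ∃ n, f^[n] u = v

/-- The weight of an unordered increasing tree with label set `V` and parent function `f`:
`wt(T) = ∏_{v ∈ V, v ≠ min V} k_{f(v)} · ((Σ_{u ∈ 𝔥_T(v)} k_u) − h_T(v) + 1)`,
in the polynomial ring `ℚ[(k_v)]` (the variable `v : ℕ` is `k_v`). -/
noncomputable def wtN (V : Finset ℕ) (f : ℕ → ℕ) : MvPolynomial ℕ ℚ :=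
  ∏ v ∈ V.erase (rootOf V),
    MvPolynomial.X (f v) *
      ((∑ u ∈ hookN V f v, MvPolynomial.X u) - ((hookN V f v).card : MvPolynomial ℕ ℚ) + 1)

/-- `ReachIn G S a b`: there is a walk from `a` to `b` in the graph `G` all of whose
vertices lie in `S` (except possibly `a` itself when the walk is trivial). -/
def ReachIn (G : SimpleGraph ℕ) (S : Finset ℕ) : ℕ → ℕ → Prop :=
  Relation.ReflTransGen fun a b => G.Adj a b ∧ a ∈ S ∧ b ∈ S

/-- A Cayley tree with vertex set `V`: a simple graph all of whose edges lie inside `V`,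
which is acyclic and in which any two vertices of `V` are connected (within `V`). -/
def IsCayleyOn (V : Finset ℕ) (G : SimpleGraph ℕ) : Prop :=
  (∀ a b, G.Adj a b → a ∈ V ∧ b ∈ V) ∧ G.IsAcyclic ∧ ∀ a ∈ V, ∀ b ∈ V, ReachIn G V a b

/-- The degree of the vertex `v` in a Cayley tree with vertex set `V`. -/
noncomputable def degIn (V : Finset ℕ) (G : SimpleGraph ℕ) (v : ℕ) : ℕ :=
  (V.filter fun u => G.Adj v u).card

/-- The parent function of the unordered increasing tree `φ(U)` associated to a Cayley
tree `U` with vertex set `V`, defined recursively: let `ℓ = min V`; remove `ℓ` from `U`;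
if `v` is the minimum of its connected component `C` of `U − ℓ` then its father is `ℓ`
(it is a son of the root), and otherwise its father is its father in `φ(U|_C)`.
(The value at the root of `V`, or for `V = ∅`, is a junk value.) -/
noncomputable def phiF (G : SimpleGraph ℕ) (V : Finset ℕ) (v : ℕ) : ℕ :=
  if hV : V = ∅ then 0
  else
    if rootOf ((V.erase (rootOf V)).filter fun u => ReachIn G (V.erase (rootOf V)) v u) = v
    then rootOf V
    else phiF G ((V.erase (rootOf V)).filter fun u => ReachIn G (V.erase (rootOf V)) v u) v
termination_by V.card
decreasing_by
  have hVne : V.Nonempty := Finset.nonempty_iff_ne_empty.mpr hV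
  have hmem : rootOf V ∈ V := by
    obtain ⟨a, ha⟩ := Finset.min_of_nonempty hVne
    have h1 : rootOf V = a := by
      unfold rootOf
      rw [ha]
      exact WithTop.untopD_coe 0 a
    rw [h1]
    exact Finset.mem_of_min ha
  calc ((V.erase (rootOf V)).filter fun u => ReachIn G (V.erase (rootOf V)) v u).card
      ≤ (V.erase (rootOf V)).card := Finset.card_le_card (Finset.filter_subset _ _)
    _ < V.card := Finset.card_erase_lt_of_mem hmem


/-!
The Cayley trees `U` with `φ(U) = T` are exactly the graphs `choiceGraph` with edges
`{f v, c v}` for `v ≠ min V`, where `c v` is an arbitrary vertex of the hook `𝔥_T(v)`, and distinct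
choices `c` give distinct trees. Such a graph is connected, each hook being connected through the
edges labelled by its proper descendants; it is acyclic, because if `v` is the smallest label on
a cycle, the edge labelled `v` is the only edge with label `≥ v` leaving `𝔥_T(v)`; and it induces
`T`, because inside the hook of `s` the components of the graph with `s` removed are the hooks of
the children of `s`.

Conversely, if `φ(U) = T`, the same description of these components, now read off from the
recursion defining `φ`, shows that `f v` has a neighbour `c v` in `𝔥_T(v)` for every `v ≠ min V`.
The graph of this `c` is a connected spanning subgraph of the tree `U`, hence equal to `U`.

The monomial of the tree of `c` is `∏_v k_{f v} k_{c v}`, and the sum over all `c` factors as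
`∏_v k_{f v} · Σ_{u ∈ 𝔥_T(v)} k_u`.
-/

open Finset

theorem rootOf_eq_min' {S : Finset ℕ} (hS : S.Nonempty) : rootOf S = S.min' hS := by
  rw [rootOf, ← Finset.coe_min' hS, WithTop.untopD_coe]

theorem rootOf_mem {S : Finset ℕ} (hS : S.Nonempty) : rootOf S ∈ S :=
  rootOf_eq_min' hS ▸ S.min'_mem hS

theorem rootOf_le {S : Finset ℕ} {v : ℕ} (hv : v ∈ S) : rootOf S ≤ v :=
  rootOf_eq_min' ⟨v, hv⟩ ▸ S.min'_le v hv

theorem Relation.ReflTransGen.mem_of_closed {α : Type*} {r : α → α → Prop} {C : Set α}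
    (hC : ∀ x y, r x y → x ∈ C → y ∈ C) {a b : α} (h : Relation.ReflTransGen r a b)
    (ha : a ∈ C) : b ∈ C := by
  induction h with
  | refl => exact ha
  | tail _ hxy ih => exact hC _ _ hxy ih

section Hook

variable {V : Finset ℕ} {f : ℕ → ℕ}

theorem mem_hookN {u v : ℕ} :
    u ∈ hookN V f v ↔ u ∈ V ∧ ∃ n, f^[n] u = v :=
  mem_filter

theorem self_mem_hookN {v : ℕ} (hv : v ∈ V) : v ∈ hookN V f v :=
  mem_hookN.2 ⟨hv, 0, rfl⟩

theorem hookN_subset {v : ℕ} : hookN V f v ⊆ V :=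
  filter_subset _ _

theorem mem_hookN_trans {u v w : ℕ} (hu : u ∈ hookN V f v) (hv : v ∈ hookN V f w) :
    u ∈ hookN V f w := by
  obtain ⟨huV, n, rfl⟩ := mem_hookN.1 hu
  obtain ⟨-, m, hm⟩ := mem_hookN.1 hv
  exact mem_hookN.2 ⟨huV, m + n, by rw [Function.iterate_add_apply, hm]⟩

theorem mem_hookN_of_parent_mem {u v : ℕ} (hu : u ∈ V) (h : f u ∈ hookN V f v) :
    u ∈ hookN V f v := by
  obtain ⟨-, n, hn⟩ := mem_hookN.1 h
  exact mem_hookN.2 ⟨hu, n + 1, hn⟩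

end Hook

namespace IsIncTree

variable {V : Finset ℕ} {f : ℕ → ℕ} (hf : IsIncTree V f)
include hf

theorem parent_mem {v : ℕ} (hv : v ∈ V) : f v ∈ V := by
  have h := hf.1 v hv
  split_ifs at h
  · rwa [h]
  · exact h.1

theorem parent_lt {v : ℕ} (hv : v ∈ V.erase (rootOf V)) : f v < v := by
  have h := hf.1 v (mem_of_mem_erase hv)
  rw [if_neg (ne_of_mem_erase hv)] at h
  exact h.2

theorem parent_le (v : ℕ) : f v ≤ v := by
  by_cases hv : v ∈ V
  · have h := hf.1 v hv
    split_ifs at h <;> omega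
  · exact (hf.2 v hv).le

theorem iterate_mem (n : ℕ) {v : ℕ} (hv : v ∈ V) : f^[n] v ∈ V := by
  induction n generalizing v with
  | zero => exact hv
  | succ n ih => exact ih (hf.parent_mem hv)

theorem iterate_le (n v : ℕ) : f^[n] v ≤ v := by
  induction n generalizing v with
  | zero => rfl
  | succ n ih => exact (ih (f v)).trans (hf.parent_le v)

theorem mem_of_mem_hookN {u v : ℕ} (hu : u ∈ hookN V f v) : v ∈ V := by
  obtain ⟨huV, n, rfl⟩ := mem_hookN.1 hu
  exact hf.iterate_mem n huV

theorem le_of_mem_hookN {u v : ℕ} (hu : u ∈ hookN V f v) : v ≤ u := by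
  obtain ⟨-, n, rfl⟩ := mem_hookN.1 hu
  exact hf.iterate_le n u

theorem rootOf_hookN {v : ℕ} (hv : v ∈ V) : rootOf (hookN V f v) = v :=
  le_antisymm (rootOf_le (self_mem_hookN hv))
    (hf.le_of_mem_hookN (rootOf_mem ⟨v, self_mem_hookN hv⟩))

theorem mem_hookN_parent {v : ℕ} (hv : v ∈ V) : v ∈ hookN V f (f v) :=
  mem_hookN_of_parent_mem hv (self_mem_hookN (hf.parent_mem hv))

theorem parent_mem_hookN {u v : ℕ} (hu : u ∈ hookN V f v) (huv : u ≠ v) :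
    f u ∈ hookN V f v := by
  obtain ⟨huV, n, hn⟩ := mem_hookN.1 hu
  cases n with
  | zero => exact absurd hn huv
  | succ n => exact mem_hookN.2 ⟨hf.parent_mem huV, n, hn⟩

theorem mem_hookN_or_mem_hookN {u v w : ℕ} (hv : u ∈ hookN V f v) (hw : u ∈ hookN V f w) :
    v ∈ hookN V f w ∨ w ∈ hookN V f v := by
  obtain ⟨huV, n, rfl⟩ := mem_hookN.1 hv
  obtain ⟨-, m, rfl⟩ := mem_hookN.1 hw
  rcases le_total n m with h | h
  · refine .inl (mem_hookN.2 ⟨hf.iterate_mem n huV, m - n, ?_⟩)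
    rw [← Function.iterate_add_apply, Nat.sub_add_cancel h]
  · refine .inr (mem_hookN.2 ⟨hf.iterate_mem m huV, n - m, ?_⟩)
    rw [← Function.iterate_add_apply, Nat.sub_add_cancel h]

theorem hookN_rootOf : hookN V f (rootOf V) = V := by
  refine hookN_subset.antisymm fun u hu => ?_
  induction u using Nat.strong_induction_on with
  | _ u ih =>
    by_cases hur : u = rootOf V
    · exact hur ▸ self_mem_hookN hu
    · have hu' : u ∈ V.erase (rootOf V) := mem_erase.2 ⟨hur, hu⟩
      exact mem_hookN_of_parent_mem hu (ih _ (hf.parent_lt hu') (hf.parent_mem hu))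

theorem exists_child_mem_hookN {u s : ℕ} (hu : u ∈ hookN V f s) (hus : u ≠ s) :
    ∃ t ∈ V.erase (rootOf V), f t = s ∧ u ∈ hookN V f t := by
  induction u using Nat.strong_induction_on with
  | _ u ih =>
    have huV : u ∈ V := hookN_subset hu
    have hu' : u ∈ V.erase (rootOf V) := by
      refine mem_erase.2 ⟨fun hur => hus ?_, huV⟩
      have := rootOf_le (hf.mem_of_mem_hookN hu)
      have := hf.le_of_mem_hookN hu
      omega
    by_cases hfu : f u = s
    · exact ⟨u, hu', hfu, self_mem_hookN huV⟩
    · obtain ⟨t, ht, hts, hft⟩ :=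
        ih _ (hf.parent_lt hu') (hf.parent_mem_hookN hu hus) hfu
      exact ⟨t, ht, hts, mem_hookN_of_parent_mem huV hft⟩

theorem eq_of_mem_hookN_of_parent_eq {t₁ t₂ u : ℕ} (ht₁ : t₁ ∈ V.erase (rootOf V))
    (ht₂ : t₂ ∈ V.erase (rootOf V)) (hpar : f t₁ = f t₂) (hu₁ : u ∈ hookN V f t₁)
    (hu₂ : u ∈ hookN V f t₂) : t₁ = t₂ := by
  have key : ∀ a b, a ∈ V.erase (rootOf V) → b ∈ V.erase (rootOf V) → f a = f b →
      a ∈ hookN V f b → a = b := fun a b ha hb hab hmem => by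
    by_contra hne
    have := hf.le_of_mem_hookN (hf.parent_mem_hookN hmem hne)
    have := hf.parent_lt hb
    omega
  rcases hf.mem_hookN_or_mem_hookN hu₁ hu₂ with h | h
  · exact key _ _ ht₁ ht₂ hpar h
  · exact (key _ _ ht₂ ht₁ hpar.symm h).symm

theorem mem_erase_rootOf_of_mem_hookN {t u : ℕ} (ht : t ∈ V.erase (rootOf V))
    (hu : u ∈ hookN V f t) : u ∈ V.erase (rootOf V) := by
  refine mem_erase.2 ⟨fun hur => ?_, hookN_subset hu⟩
  have := rootOf_le (hf.parent_mem (mem_of_mem_erase ht))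
  have := hf.parent_lt ht
  have := hf.le_of_mem_hookN hu
  omega

theorem hookN_induction {P : ℕ → Prop}
    (h : ∀ s ∈ V, (∀ t ∈ V.erase (rootOf V), f t = s → P t) → P s) {s : ℕ}
    (hs : s ∈ V) : P s := by
  induction hn : V.sup id - s using Nat.strong_induction_on generalizing s with
  | _ n ih =>
    refine h s hs fun t ht hts => ih _ ?_ (mem_of_mem_erase ht) rfl
    have : t ≤ V.sup id := Finset.le_sup (f := id) (mem_of_mem_erase ht)
    have := hf.parent_lt ht
    omega

end IsIncTree

theorem SimpleGraph.eq_of_le_of_isAcyclic {α : Type*} {H G : SimpleGraph α} (hle : H ≤ G)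
    (hG : G.IsAcyclic) (hreach : ∀ a b, G.Adj a b → H.Reachable a b) : H = G := by
  refine le_antisymm hle fun a b hab => ?_
  by_contra hH
  refine (SimpleGraph.isBridge_iff.1 (SimpleGraph.isAcyclic_iff_forall_adj_isBridge.1 hG hab))
    ((hreach a b hab).mono fun x y hxy => ?_)
  refine SimpleGraph.deleteEdges_adj.2 ⟨hle hxy, fun he => hH ?_⟩
  rcases Sym2.eq_iff.1 (Set.mem_singleton_iff.1 he) with ⟨rfl, rfl⟩ | ⟨rfl, rfl⟩
  · exact hxy
  · exact hxy.symm

section ReachIn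

variable {G : SimpleGraph ℕ} {R S : Finset ℕ} {a b u v : ℕ}

theorem ReachIn.mono (hRS : R ⊆ S) (h : ReachIn G R a b) : ReachIn G S a b :=
  Relation.ReflTransGen.mono (fun _ _ hxy => ⟨hxy.1, hRS hxy.2.1, hRS hxy.2.2⟩) _ _ h

theorem ReachIn.symm (h : ReachIn G R a b) : ReachIn G R b a := by
  induction h with
  | refl => exact .refl
  | tail _ hxy ih => exact ih.head ⟨hxy.1.symm, hxy.2.2, hxy.2.1⟩

theorem ReachIn.reachable (h : ReachIn G R a b) : G.Reachable a b :=
  (SimpleGraph.reachable_iff_reflTransGen a b).2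
    (Relation.ReflTransGen.mono (fun _ _ hxy => hxy.1) _ _ h)

noncomputable def componentIn (G : SimpleGraph ℕ) (R : Finset ℕ) (v : ℕ) : Finset ℕ :=
  R.filter (ReachIn G R v)

theorem mem_componentIn : u ∈ componentIn G R v ↔ u ∈ R ∧ ReachIn G R v u :=
  mem_filter

theorem componentIn_subset : componentIn G R v ⊆ R :=
  filter_subset _ _

theorem self_mem_componentIn (hv : v ∈ R) : v ∈ componentIn G R v :=
  mem_componentIn.2 ⟨hv, .refl⟩

theorem componentIn_eq_of_mem (hu : u ∈ componentIn G R v) :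
    componentIn G R u = componentIn G R v := by
  obtain ⟨-, hvu⟩ := mem_componentIn.1 hu
  ext x
  simp only [mem_componentIn]
  exact and_congr_right fun _ => ⟨hvu.trans, hvu.symm.trans⟩

theorem mem_componentIn_of_adj (hu : u ∈ componentIn G R v) (hadj : G.Adj u a) (ha : a ∈ R) :
    a ∈ componentIn G R v := by
  obtain ⟨huR, hvu⟩ := mem_componentIn.1 hu
  exact mem_componentIn.2 ⟨ha, hvu.tail ⟨hadj, huR, ha⟩⟩

theorem ReachIn.reachIn_componentIn (h : ReachIn G R a b) :
    ReachIn G (componentIn G R a) a b := by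
  induction h with
  | refl => exact .refl
  | tail hax hxy ih =>
    exact ih.tail
      ⟨hxy.1, mem_componentIn.2 ⟨hxy.2.1, hax⟩, mem_componentIn.2 ⟨hxy.2.2, hax.tail hxy⟩⟩

theorem phiF_eq (hS : S.Nonempty) (v : ℕ) :
    phiF G S v = if rootOf (componentIn G (S.erase (rootOf S)) v) = v then rootOf S
      else phiF G (componentIn G (S.erase (rootOf S)) v) v := by
  rw [phiF, dif_neg hS.ne_empty]
  rfl

theorem phiF_mem (hv : v ∈ S) (hvr : v ≠ rootOf S) : phiF G S v ∈ S := by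
  induction S using strongInduction with
  | H S ih =>
    have hS : S.Nonempty := ⟨v, hv⟩
    have hCS : componentIn G (S.erase (rootOf S)) v ⊂ S :=
      (componentIn_subset.trans_ssubset (erase_ssubset (rootOf_mem hS)))
    rw [phiF_eq hS]
    split_ifs with hC
    · exact rootOf_mem hS
    · exact hCS.subset (ih _ hCS (self_mem_componentIn (mem_erase.2 ⟨hvr, hv⟩))
        (Ne.symm hC))

end ReachIn

theorem IsIncTree.phiF_hookN_eq {V : Finset ℕ} {f : ℕ → ℕ} (hf : IsIncTree V f)
    {G : SimpleGraph ℕ} {s t v : ℕ} (hs : s ∈ V) (ht : t ∈ V)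
    (hcomp : componentIn G ((hookN V f s).erase s) v = hookN V f t) :
    phiF G (hookN V f s) v = if t = v then s else phiF G (hookN V f t) v := by
  rw [phiF_eq ⟨s, self_mem_hookN hs⟩, hf.rootOf_hookN hs, hcomp, hf.rootOf_hookN ht]

noncomputable def choiceGraph (L : Finset ℕ) (f c : ℕ → ℕ) : SimpleGraph ℕ :=
  SimpleGraph.fromEdgeSet ((fun v => s(f v, c v)) '' L)

theorem choiceGraph_congr {L : Finset ℕ} {f c c' : ℕ → ℕ} (h : ∀ v ∈ L, c v = c' v) :
    choiceGraph L f c = choiceGraph L f c' := by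
  rw [choiceGraph, choiceGraph, Set.image_congr fun v hv => by rw [h v hv]]

namespace IsIncTree

variable {V : Finset ℕ} {f : ℕ → ℕ} (hf : IsIncTree V f)
include hf

theorem hookN_subset_hookN_parent {t : ℕ} (ht : t ∈ V) : hookN V f t ⊆ hookN V f (f t) :=
  fun _ hu => mem_hookN_trans hu (hf.mem_hookN_parent ht)

theorem hookN_subset_erase_parent {t : ℕ} (ht : t ∈ V.erase (rootOf V)) :
    hookN V f t ⊆ (hookN V f (f t)).erase (f t) := fun _ hx =>
  mem_erase.2 ⟨fun hxt => (hf.le_of_mem_hookN hx).not_gt (hxt ▸ hf.parent_lt ht),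
    hf.hookN_subset_hookN_parent (mem_of_mem_erase ht) hx⟩

section ChoiceGraph

variable {c : ℕ → ℕ} (hc : ∀ v ∈ V.erase (rootOf V), c v ∈ hookN V f v)
include hc

theorem parent_lt_choice {v : ℕ} (hv : v ∈ V.erase (rootOf V)) : f v < c v :=
  (hf.parent_lt hv).trans_le (hf.le_of_mem_hookN (hc v hv))

theorem choiceGraph_adj {L : Finset ℕ} (hL : L ⊆ V.erase (rootOf V)) {a b : ℕ} :
    (choiceGraph L f c).Adj a b ↔ ∃ v ∈ L, s(f v, c v) = s(a, b) := by
  rw [choiceGraph, SimpleGraph.fromEdgeSet_adj, Set.mem_image]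
  refine ⟨And.left, fun h => ⟨h, ?_⟩⟩
  rintro rfl
  obtain ⟨v, hv, he⟩ := h
  have := hf.parent_lt_choice hc (hL hv)
  rcases Sym2.eq_iff.1 he with ⟨h₁, h₂⟩ | ⟨h₁, h₂⟩ <;> omega

theorem mem_of_choiceGraph_adj {a b : ℕ}
    (hab : (choiceGraph (V.erase (rootOf V)) f c).Adj a b) : a ∈ V ∧ b ∈ V := by
  obtain ⟨v, hv, he⟩ := (hf.choiceGraph_adj hc subset_rfl).1 hab
  have hfv := hf.parent_mem (mem_of_mem_erase hv)
  have hcv := hookN_subset (hc v hv)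
  rcases Sym2.eq_iff.1 he with ⟨rfl, rfl⟩ | ⟨rfl, rfl⟩ <;> exact ⟨‹_›, ‹_›⟩

theorem eq_of_choice_edge_eq {c' : ℕ → ℕ}
    (hc' : ∀ v ∈ V.erase (rootOf V), c' v ∈ hookN V f v)
    {v w : ℕ} (hv : v ∈ V.erase (rootOf V)) (hw : w ∈ V.erase (rootOf V))
    (he : s(f v, c v) = s(f w, c' w)) : v = w := by
  rcases Sym2.eq_iff.1 he with ⟨hpar, hch⟩ | ⟨h₁, h₂⟩
  · exact hf.eq_of_mem_hookN_of_parent_eq hv hw hpar (hc v hv) (hch ▸ hc' w hw)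
  · have := hf.parent_lt_choice hc hv
    have := hf.parent_lt_choice hc' hw
    omega

theorem choice_eq_of_choiceGraph_eq {c' : ℕ → ℕ}
    (hc' : ∀ v ∈ V.erase (rootOf V), c' v ∈ hookN V f v)
    (h : choiceGraph (V.erase (rootOf V)) f c = choiceGraph (V.erase (rootOf V)) f c') :
    ∀ v ∈ V.erase (rootOf V), c v = c' v := by
  intro v hv
  have hadj : (choiceGraph (V.erase (rootOf V)) f c).Adj (f v) (c v) :=
    (hf.choiceGraph_adj hc subset_rfl).2 ⟨v, hv, rfl⟩
  rw [h, hf.choiceGraph_adj hc' subset_rfl] at hadj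
  obtain ⟨w, hw, he⟩ := hadj
  obtain rfl := hf.eq_of_choice_edge_eq hc hc' hv hw he.symm
  exact (Sym2.congr_right.1 he).symm

theorem reachIn_choiceGraph {s : ℕ} (hs : s ∈ V) {a : ℕ} (ha : a ∈ hookN V f s) :
    ReachIn (choiceGraph (V.erase (rootOf V)) f c) (hookN V f s) a s := by
  refine hf.hookN_induction
    (P := fun s => ∀ a ∈ hookN V f s, ReachIn (choiceGraph _ f c) (hookN V f s) a s)
    (fun s hs ih a ha => ?_) hs a ha
  by_cases has : a = s
  · exact has ▸ .refl
  obtain ⟨t, ht, rfl, hat⟩ := hf.exists_child_mem_hookN ha has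
  have hsub := hf.hookN_subset_hookN_parent (mem_of_mem_erase ht)
  have hct := hc t ht
  have hedge : (choiceGraph (V.erase (rootOf V)) f c).Adj (c t) (f t) :=
    (hf.choiceGraph_adj hc subset_rfl).2 ⟨t, ht, Sym2.eq_swap⟩
  exact (ReachIn.mono hsub ((ih t ht rfl a hat).trans (ih t ht rfl (c t) hct).symm)).tail
    ⟨hedge, hsub hct, self_mem_hookN hs⟩

theorem exists_child_of_choiceGraph_adj {s a b : ℕ} (ha : a ∈ (hookN V f s).erase s)
    (hb : b ∈ (hookN V f s).erase s) (hab : (choiceGraph (V.erase (rootOf V)) f c).Adj a b) :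
    ∃ t ∈ V.erase (rootOf V), f t = s ∧ a ∈ hookN V f t ∧ b ∈ hookN V f t := by
  obtain ⟨w, hw, he⟩ := (hf.choiceGraph_adj hc subset_rfl).1 hab
  have hfw : f w ∈ (hookN V f s).erase s := by
    rcases Sym2.eq_iff.1 he with ⟨h, -⟩ | ⟨h, -⟩ <;> rwa [h]
  obtain ⟨t, ht, hts, hft⟩ :=
    hf.exists_child_mem_hookN (mem_of_mem_erase hfw) (ne_of_mem_erase hfw)
  have hwt : w ∈ hookN V f t := mem_hookN_of_parent_mem (mem_of_mem_erase hw) hft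
  have hct : c w ∈ hookN V f t := mem_hookN_trans (hc w hw) hwt
  refine ⟨t, ht, hts, ?_⟩
  rcases Sym2.eq_iff.1 he with ⟨rfl, rfl⟩ | ⟨rfl, rfl⟩
  exacts [⟨hft, hct⟩, ⟨hct, hft⟩]

theorem componentIn_choiceGraph {t v : ℕ} (ht : t ∈ V.erase (rootOf V))
    (hv : v ∈ hookN V f t) :
    componentIn (choiceGraph (V.erase (rootOf V)) f c) ((hookN V f (f t)).erase (f t)) v =
      hookN V f t := by
  have hsub := hf.hookN_subset_erase_parent ht
  have htV := mem_of_mem_erase ht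
  ext u
  refine ⟨fun hu => (mem_componentIn.1 hu).2.mem_of_closed (fun x y hxy hx => ?_) hv,
    fun hu => mem_componentIn.2 ⟨hsub hu, ?_⟩⟩
  · obtain ⟨t', ht', hpar, hxt', hyt'⟩ :=
      hf.exists_child_of_choiceGraph_adj hc hxy.2.1 hxy.2.2 hxy.1
    rwa [hf.eq_of_mem_hookN_of_parent_eq ht ht' hpar.symm hx hxt']
  · exact ReachIn.mono hsub ((hf.reachIn_choiceGraph hc htV hv).trans
      (hf.reachIn_choiceGraph hc htV hu).symm)

theorem phiF_choiceGraph_hookN {s : ℕ} (hs : s ∈ V) {v : ℕ} (hv : v ∈ hookN V f s)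
    (hvs : v ≠ s) : phiF (choiceGraph (V.erase (rootOf V)) f c) (hookN V f s) v = f v := by
  refine hf.hookN_induction (P := fun s => ∀ v ∈ hookN V f s, v ≠ s →
      phiF (choiceGraph _ f c) (hookN V f s) v = f v) (fun s hs ih v hv hvs => ?_) hs v hv hvs
  obtain ⟨t, ht, rfl, hvt⟩ := hf.exists_child_mem_hookN hv hvs
  rw [hf.phiF_hookN_eq hs (mem_of_mem_erase ht) (hf.componentIn_choiceGraph hc ht hvt)]
  split_ifs with htv
  · rw [htv]
  · exact ih t ht rfl v hvt (Ne.symm htv)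

-- Among the edges with labels `≥ v`, the one labelled `v` is the only one leaving `hookN V f v`.
theorem isBridge_choiceGraph_filter {v : ℕ} (hv : v ∈ V.erase (rootOf V)) :
    (choiceGraph ((V.erase (rootOf V)).filter (v ≤ ·)) f c).IsBridge s(f v, c v) := by
  rw [SimpleGraph.isBridge_iff]
  intro hreach
  have hclosed : c v ∈ hookN V f v → f v ∈ hookN V f v := by
    refine ((SimpleGraph.reachable_iff_reflTransGen _ _).1 hreach.symm).mem_of_closed
      (C := {x | x ∈ hookN V f v}) fun x y hxy hx => ?_
    obtain ⟨hadj, hne⟩ := SimpleGraph.deleteEdges_adj.1 hxy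
    obtain ⟨w, hw, he⟩ := (hf.choiceGraph_adj hc (filter_subset _ _)).1 hadj
    obtain ⟨hwL, hvw⟩ := mem_filter.1 hw
    have hwv : w ≠ v := by
      rintro rfl
      exact hne (Set.mem_singleton_iff.2 he.symm)
    rcases Sym2.eq_iff.1 he with ⟨rfl, rfl⟩ | ⟨rfl, rfl⟩
    · exact mem_hookN_trans (hc w hwL) (mem_hookN_of_parent_mem (mem_of_mem_erase hwL) hx)
    · rcases hf.mem_hookN_or_mem_hookN (hc w hwL) hx with hwv' | hvw'
      · exact hf.parent_mem_hookN hwv' hwv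
      · exact absurd (le_antisymm (hf.le_of_mem_hookN hvw') hvw) hwv
  exact (hf.le_of_mem_hookN (hclosed (hc v hv))).not_gt (hf.parent_lt hv)

theorem isAcyclic_choiceGraph : (choiceGraph (V.erase (rootOf V)) f c).IsAcyclic := by
  intro u p hp
  set labels := (V.erase (rootOf V)).filter fun w => s(f w, c w) ∈ p.edges
  have hlabel : ∀ e ∈ p.edges, ∃ w ∈ labels, s(f w, c w) = e := by
    intro e he
    induction e using Sym2.ind with
    | _ a b =>
      obtain ⟨w, hw, hwe⟩ := (hf.choiceGraph_adj hc subset_rfl).1 (p.edges_subset_edgeSet he)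
      exact ⟨w, mem_filter.2 ⟨hw, hwe ▸ he⟩, hwe⟩
  obtain ⟨e, he⟩ := List.exists_mem_of_length_pos
    (p.length_edges ▸ (show 0 < 3 by decide).trans_le hp.three_le_length)
  have hne : labels.Nonempty := let ⟨w, hw, _⟩ := hlabel e he; ⟨w, hw⟩
  have hv := mem_filter.1 (labels.min'_mem hne)
  have hsub : ∀ e ∈ p.edges,
      e ∈ (choiceGraph ((V.erase (rootOf V)).filter (labels.min' hne ≤ ·)) f c).edgeSet := by
    intro e he
    obtain ⟨w, hw, rfl⟩ := hlabel e he
    rw [SimpleGraph.mem_edgeSet, hf.choiceGraph_adj hc (filter_subset _ _)]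
    exact ⟨w, mem_filter.2 ⟨(mem_filter.1 hw).1, labels.min'_le w hw⟩, rfl⟩
  refine (hf.isBridge_choiceGraph_filter hc hv.1).notMem_edges_of_isCycle (hp.transfer hsub) ?_
  rw [SimpleGraph.Walk.edges_transfer]
  exact hv.2

theorem isCayleyOn_choiceGraph (hV : V.Nonempty) :
    IsCayleyOn V (choiceGraph (V.erase (rootOf V)) f c) := by
  have hroot : ∀ x ∈ V, ReachIn (choiceGraph (V.erase (rootOf V)) f c) V x (rootOf V) := by
    intro x hx
    have := hf.reachIn_choiceGraph hc (rootOf_mem hV) (a := x)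
    rw [hf.hookN_rootOf] at this
    exact this hx
  exact ⟨fun _ _ => hf.mem_of_choiceGraph_adj hc, hf.isAcyclic_choiceGraph hc,
    fun a ha b hb => (hroot a ha).trans (hroot b hb).symm⟩

theorem phiF_choiceGraph (hV : V.Nonempty) {v : ℕ} (hv : v ∈ V) (hvr : v ≠ rootOf V) :
    phiF (choiceGraph (V.erase (rootOf V)) f c) V v = f v := by
  have := hf.phiF_choiceGraph_hookN hc (rootOf_mem hV) (v := v)
  rw [hf.hookN_rootOf] at this
  exact this hv hvr

theorem eq_of_parent_eq_of_choice_eq {w₁ w₂ : ℕ} (hw₁ : w₁ ∈ V.erase (rootOf V))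
    (hw₂ : w₂ ∈ V.erase (rootOf V)) (hpar : f w₁ = f w₂) (hch : c w₁ = c w₂) : w₁ = w₂ :=
  hf.eq_of_choice_edge_eq hc hc hw₁ hw₂ (by rw [hpar, hch])

theorem filter_adj_choiceGraph (v : ℕ) :
    V.filter ((choiceGraph (V.erase (rootOf V)) f c).Adj v) =
      {w ∈ V.erase (rootOf V) | f w = v}.image c ∪
        {w ∈ V.erase (rootOf V) | c w = v}.image f := by
  ext u
  simp only [mem_filter, mem_union, mem_image, hf.choiceGraph_adj hc subset_rfl, Sym2.eq_iff]
  constructor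
  · rintro ⟨-, w, hw, ⟨hfw, hcw⟩ | ⟨hfw, hcw⟩⟩
    exacts [.inl ⟨w, ⟨hw, hfw⟩, hcw⟩, .inr ⟨w, ⟨hw, hcw⟩, hfw⟩]
  · rintro (⟨w, ⟨hw, hfw⟩, rfl⟩ | ⟨w, ⟨hw, hcw⟩, rfl⟩)
    · exact ⟨hookN_subset (hc w hw), w, hw, .inl ⟨hfw, rfl⟩⟩
    · exact ⟨hf.parent_mem (mem_of_mem_erase hw), w, hw, .inr ⟨rfl, hcw⟩⟩

theorem degIn_choiceGraph (v : ℕ) :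
    degIn V (choiceGraph (V.erase (rootOf V)) f c) v =
      #{w ∈ V.erase (rootOf V) | f w = v} + #{w ∈ V.erase (rootOf V) | c w = v} := by
  rw [degIn, hf.filter_adj_choiceGraph hc, card_union_of_disjoint, card_image_of_injOn,
    card_image_of_injOn]
  · intro w₁ hw₁ w₂ hw₂ h
    rw [mem_coe, mem_filter] at hw₁ hw₂
    exact hf.eq_of_parent_eq_of_choice_eq hc hw₁.1 hw₂.1 h (hw₁.2.trans hw₂.2.symm)
  · intro w₁ hw₁ w₂ hw₂ h
    rw [mem_coe, mem_filter] at hw₁ hw₂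
    exact hf.eq_of_parent_eq_of_choice_eq hc hw₁.1 hw₂.1 (hw₁.2.trans hw₂.2.symm) h
  · rw [disjoint_left]
    rintro u hu₁ hu₂
    obtain ⟨w₁, hw₁, rfl⟩ := mem_image.1 hu₁
    obtain ⟨w₂, hw₂, hw⟩ := mem_image.1 hu₂
    obtain ⟨hw₁, hfw₁⟩ := mem_filter.1 hw₁
    obtain ⟨hw₂, hcw₂⟩ := mem_filter.1 hw₂
    have := hf.parent_lt_choice hc hw₁
    have := hf.parent_lt_choice hc hw₂
    omega

theorem prod_pow_degIn_choiceGraph {M : Type*} [CommMonoid M] (x : ℕ → M) :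
    ∏ v ∈ V, x v ^ degIn V (choiceGraph (V.erase (rootOf V)) f c) v =
      ∏ v ∈ V.erase (rootOf V), x (f v) * x (c v) := by
  have hfiber : ∀ g : ℕ → ℕ, (∀ w ∈ V.erase (rootOf V), g w ∈ V) →
      ∏ v ∈ V, x v ^ #{w ∈ V.erase (rootOf V) | g w = v} =
        ∏ w ∈ V.erase (rootOf V), x (g w) :=
    fun g hg => by
      simp_rw [← prod_const]
      exact prod_fiberwise_of_maps_to' hg x
  rw [prod_congr rfl fun v _ => by rw [hf.degIn_choiceGraph hc v, pow_add],
    prod_mul_distrib, prod_mul_distrib,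
    hfiber f fun w hw => hf.parent_mem (mem_of_mem_erase hw),
    hfiber c fun w hw => hookN_subset (hc w hw)]

end ChoiceGraph

variable {G : SimpleGraph ℕ}

section Child

variable {s : ℕ} (hs : s ∈ V)
  (hphi : ∀ v ∈ hookN V f s, v ≠ s → phiF G (hookN V f s) v = f v)
include hs hphi

theorem parent_eq_of_phiF {u : ℕ} (hu : u ∈ (hookN V f s).erase s) :
    f u = if rootOf (componentIn G ((hookN V f s).erase s) u) = u then s
      else phiF G (componentIn G ((hookN V f s).erase s) u) u := by
  rw [← hphi u (mem_of_mem_erase hu) (ne_of_mem_erase hu),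
    phiF_eq ⟨s, self_mem_hookN hs⟩, hf.rootOf_hookN hs]

theorem parent_mem_componentIn_of_phiF {u : ℕ} (hu : u ∈ (hookN V f s).erase s)
    (hfu : f u ≠ s) : f u ∈ componentIn G ((hookN V f s).erase s) u := by
  rw [hf.parent_eq_of_phiF hs hphi hu] at hfu ⊢
  split_ifs at hfu ⊢ with hr
  · exact absurd rfl hfu
  · exact phiF_mem (self_mem_componentIn hu) (Ne.symm hr)

theorem rootOf_componentIn_child_of_phiF {t : ℕ} (ht : t ∈ V.erase (rootOf V)) (hts : f t = s) :
    rootOf (componentIn G ((hookN V f s).erase s) t) = t := by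
  have htR : t ∈ (hookN V f s).erase s :=
    hts ▸ hf.hookN_subset_erase_parent ht (self_mem_hookN (mem_of_mem_erase ht))
  by_contra hr
  have h := hf.parent_eq_of_phiF hs hphi htR
  rw [if_neg hr, hts] at h
  have := componentIn_subset (phiF_mem (G := G) (self_mem_componentIn htR) (Ne.symm hr))
  rw [← h] at this
  exact ne_of_mem_erase this rfl

theorem componentIn_eq_of_mem_hookN_child {t : ℕ} (ht : t ∈ V.erase (rootOf V)) (hts : f t = s)
    {u : ℕ} (hu : u ∈ hookN V f t) :
    componentIn G ((hookN V f s).erase s) u = componentIn G ((hookN V f s).erase s) t := by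
  induction u using Nat.strong_induction_on with
  | _ u ih =>
    by_cases hut : u = t
    · rw [hut]
    have hsub := hts ▸ hf.hookN_subset_erase_parent ht
    have hfu := hf.parent_mem_hookN hu hut
    have hfus : f u ≠ s := ne_of_mem_erase (hsub hfu)
    rw [← ih _ (hf.parent_lt (hf.mem_erase_rootOf_of_mem_hookN ht hu)) hfu,
      componentIn_eq_of_mem (hf.parent_mem_componentIn_of_phiF hs hphi (hsub hu) hfus)]

theorem componentIn_eq_hookN_of_phiF {t : ℕ} (ht : t ∈ V.erase (rootOf V)) (hts : f t = s)
    {v : ℕ} (hv : v ∈ hookN V f t) : componentIn G ((hookN V f s).erase s) v = hookN V f t := by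
  have hsub := hts ▸ hf.hookN_subset_erase_parent ht
  rw [hf.componentIn_eq_of_mem_hookN_child hs hphi ht hts hv]
  ext u
  refine ⟨fun hu => ?_, fun hu => ?_⟩
  · obtain ⟨t', ht', hts', hut'⟩ := hf.exists_child_mem_hookN (mem_of_mem_erase
      (componentIn_subset hu)) (ne_of_mem_erase (componentIn_subset hu))
    have h := hf.componentIn_eq_of_mem_hookN_child hs hphi ht' hts' hut'
    rw [componentIn_eq_of_mem hu] at h
    have htt : t' = t := by
      rw [← hf.rootOf_componentIn_child_of_phiF hs hphi ht' hts', ← h,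
        hf.rootOf_componentIn_child_of_phiF hs hphi ht hts]
    rwa [htt] at hut'
  · rw [← hf.componentIn_eq_of_mem_hookN_child hs hphi ht hts hu]
    exact self_mem_componentIn (hsub hu)

theorem phiF_hookN_child_of_phiF {t : ℕ} (ht : t ∈ V.erase (rootOf V)) (hts : f t = s) :
    ∀ v ∈ hookN V f t, v ≠ t → phiF G (hookN V f t) v = f v := by
  intro v hv hvt
  have hvR := (hts ▸ hf.hookN_subset_erase_parent ht) hv
  have h := hphi v (mem_of_mem_erase hvR) (ne_of_mem_erase hvR)
  rwa [hf.phiF_hookN_eq hs (mem_of_mem_erase ht)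
    (hf.componentIn_eq_hookN_of_phiF hs hphi ht hts hv), if_neg (Ne.symm hvt)] at h

theorem reachIn_hookN_child_of_phiF {t : ℕ} (ht : t ∈ V.erase (rootOf V)) (hts : f t = s) :
    ∀ a ∈ hookN V f t, ReachIn G (hookN V f t) t a := by
  intro a ha
  have hcomp := hf.componentIn_eq_hookN_of_phiF hs hphi ht hts
    (self_mem_hookN (mem_of_mem_erase ht))
  rw [← hcomp] at ha ⊢
  exact (mem_componentIn.1 ha).2.reachIn_componentIn

theorem exists_adj_hookN_child_of_phiF
    (hconn : ∀ a ∈ hookN V f s, ReachIn G (hookN V f s) s a)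
    {t : ℕ} (ht : t ∈ V.erase (rootOf V)) (hts : f t = s) :
    ∃ u ∈ hookN V f t, G.Adj s u := by
  have htV := mem_of_mem_erase ht
  have hcomp := hf.componentIn_eq_hookN_of_phiF hs hphi ht hts (self_mem_hookN htV)
  by_contra! hno
  have hst : s ∈ hookN V f t := by
    refine (hconn t (hts ▸ hf.mem_hookN_parent htV)).symm.mem_of_closed
      (C := {x | x ∈ hookN V f t}) (fun x y hxy hx => ?_) (self_mem_hookN htV)
    by_cases hys : y = s
    · exact absurd hxy.1.symm (hys ▸ hno x hx)
    · rw [← hcomp] at hx ⊢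
      exact mem_componentIn_of_adj hx hxy.1 (mem_erase.2 ⟨hys, hxy.2.2⟩)
  exact (hf.le_of_mem_hookN hst).not_gt (hts ▸ hf.parent_lt ht)

end Child

section Surjectivity

variable (hphi : ∀ v ∈ V, v ≠ rootOf V → phiF G V v = f v)
include hphi

theorem phiF_hookN_of_phiF {s : ℕ} (hs : s ∈ V) :
    ∀ v ∈ hookN V f s, v ≠ s → phiF G (hookN V f s) v = f v := by
  induction s using Nat.strong_induction_on with
  | _ s ih =>
    by_cases hsr : s = rootOf V
    · rw [hsr, hf.hookN_rootOf]
      exact hphi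
    have hs' : s ∈ V.erase (rootOf V) := mem_erase.2 ⟨hsr, hs⟩
    exact hf.phiF_hookN_child_of_phiF (hf.parent_mem hs)
      (ih _ (hf.parent_lt hs') (hf.parent_mem hs)) hs' rfl

theorem reachIn_hookN_of_phiF (hconn : ∀ a ∈ V, ∀ b ∈ V, ReachIn G V a b) {s : ℕ}
    (hs : s ∈ V) :
    ∀ a ∈ hookN V f s, ReachIn G (hookN V f s) s a := by
  by_cases hsr : s = rootOf V
  · rw [hsr, hf.hookN_rootOf]
    exact hconn _ (hsr ▸ hs)
  have hs' : s ∈ V.erase (rootOf V) := mem_erase.2 ⟨hsr, hs⟩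
  exact hf.reachIn_hookN_child_of_phiF (hf.parent_mem hs)
    (hf.phiF_hookN_of_phiF hphi (hf.parent_mem hs)) hs' rfl

theorem exists_choiceGraph_eq (hG : IsCayleyOn V G) (hV : V.Nonempty) :
    ∃ c : ℕ → ℕ, (∀ v ∈ V.erase (rootOf V), c v ∈ hookN V f v) ∧
      choiceGraph (V.erase (rootOf V)) f c = G := by
  have hadj : ∀ v ∈ V.erase (rootOf V), ∃ u, u ∈ hookN V f v ∧ G.Adj (f v) u := by
    intro v hv
    have hfv := hf.parent_mem (mem_of_mem_erase hv)
    obtain ⟨u, hu, hadj⟩ := hf.exists_adj_hookN_child_of_phiF hfv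
      (hf.phiF_hookN_of_phiF hphi hfv) (hf.reachIn_hookN_of_phiF hphi hG.2.2 hfv) hv rfl
    exact ⟨u, hu, hadj⟩
  choose! c hc hGc using hadj
  refine ⟨c, hc, SimpleGraph.eq_of_le_of_isAcyclic (fun a b hab => ?_) hG.2.1 fun a b hab => ?_⟩
  · obtain ⟨w, hw, he⟩ := (hf.choiceGraph_adj hc subset_rfl).1 hab
    rw [← SimpleGraph.mem_edgeSet, ← he]
    exact hGc w hw
  · exact ((hf.isCayleyOn_choiceGraph hc hV).2.2 a (hG.1 a b hab).1 b (hG.1 a b hab).2).reachable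

end Surjectivity

end IsIncTree

noncomputable def extendChoice (L : Finset ℕ) (p : ∀ v ∈ L, ℕ) (v : ℕ) : ℕ :=
  if h : v ∈ L then p v h else v

theorem extendChoice_of_mem {L : Finset ℕ} (p : ∀ v ∈ L, ℕ) {v : ℕ} (hv : v ∈ L) :
    extendChoice L p v = p v hv :=
  dif_pos hv

theorem extendChoice_mem_hookN {V : Finset ℕ} {f : ℕ → ℕ} {p : ∀ v ∈ V.erase (rootOf V), ℕ}
    (hp : p ∈ (V.erase (rootOf V)).pi (hookN V f)) :
    ∀ v ∈ V.erase (rootOf V), extendChoice (V.erase (rootOf V)) p v ∈ hookN V f v :=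
  fun v hv => extendChoice_of_mem p hv ▸ mem_pi.1 hp v hv

theorem IsIncTree.bijOn_choiceGraph {V : Finset ℕ} {f : ℕ → ℕ} (hf : IsIncTree V f)
    (hV : V.Nonempty) :
    Set.BijOn (fun p => choiceGraph (V.erase (rootOf V)) f (extendChoice (V.erase (rootOf V)) p))
      ((V.erase (rootOf V)).pi (hookN V f))
      {G | IsCayleyOn V G ∧ ∀ v ∈ V, v ≠ rootOf V → phiF G V v = f v} := by
  refine ⟨fun p hp => ⟨hf.isCayleyOn_choiceGraph (extendChoice_mem_hookN hp) hV,
    fun v hv hvr => hf.phiF_choiceGraph (extendChoice_mem_hookN hp) hV hv hvr⟩,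
    fun p hp q hq hpq => ?_, fun G ⟨hG, hphi⟩ => ?_⟩
  · funext v hv
    simpa only [extendChoice_of_mem _ hv] using hf.choice_eq_of_choiceGraph_eq
      (extendChoice_mem_hookN hp) (extendChoice_mem_hookN hq) hpq v hv
  · obtain ⟨c, hc, rfl⟩ := hf.exists_choiceGraph_eq hphi hG hV
    exact ⟨fun v _ => c v, mem_pi.2 hc, choiceGraph_congr fun v hv => extendChoice_of_mem _ hv⟩

theorem stmt5_general (V : Finset ℕ) (hV : V.Nonempty)
    (f : ℕ → ℕ) (hf : IsIncTree V f) :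
    ∑ᶠ (G : SimpleGraph ℕ)
        (_ : IsCayleyOn V G ∧ ∀ v ∈ V, v ≠ rootOf V → phiF G V v = f v),
        ∏ v ∈ V, (MvPolynomial.X v : MvPolynomial ℕ ℚ) ^ degIn V G v
      = ∏ v ∈ V.erase (rootOf V),
          MvPolynomial.X (f v) * ∑ u ∈ hookN V f v, MvPolynomial.X u := by
  refine (finsum_mem_eq_of_bijOn _ (hf.bijOn_choiceGraph hV) fun _ _ => rfl).symm.trans ?_
  simp_rw [finsum_mem_coe_finset, mul_sum]
  rw [prod_sum]
  refine sum_congr rfl fun p hp => ?_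
  rw [hf.prod_pow_degIn_choiceGraph (extendChoice_mem_hookN hp), ← prod_attach]
  exact prod_congr rfl fun v _ => by rw [extendChoice_of_mem p v.2]

/-- For an unordered increasing tree `T` with label set `V` (a finite nonempty set of
positive integers), the sum over all Cayley trees `U` with vertex set `V` such that
`φ(U) = T` of the monomial `∏_{v ∈ V} k_v^{d_v(U)}` equals
`∏_{v ∈ V, v ≠ min V} k_{f(v)} · (Σ_{u ∈ 𝔥_T(v)} k_u)`, in `ℚ[(k_v)_{v ∈ V}]`. -/
theorem stmt5 (V : Finset ℕ) (hV : V.Nonempty) (hpos : ∀ v ∈ V, 0 < v)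
    (f : ℕ → ℕ) (hf : IsIncTree V f) :
    ∑ᶠ (G : SimpleGraph ℕ)
        (_ : IsCayleyOn V G ∧ ∀ v ∈ V, v ≠ rootOf V → phiF G V v = f v),
        ∏ v ∈ V, (MvPolynomial.X v : MvPolynomial ℕ ℚ) ^ degIn V G v
      = ∏ v ∈ V.erase (rootOf V),
          MvPolynomial.X (f v) * ∑ u ∈ hookN V f v, MvPolynomial.X u :=
  stmt5_general V hV f hf
end

section
/- For every integer n ≥ 1, the following identity holds in ℚ[x]: the sum over all increasing binary trees T with n nodes of the product ∏_{v ∈ T} (x·h_T(v) + 1) equals (1/(n+1)) · ∏_{i=0}^{n−1} ((n+1+i)·x + n+1−i). -/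
/-! Both sides satisfy the same recurrence. Removing the root (the smallest label) of an
increasing tree on a label set `S` leaves increasing trees on a subset `A` of the remaining
labels and on its complement, so the sum `F_n` over trees on `n` labels satisfies
`F_{n+1} = ((n+1)x + 1) ∑_k C(n,k) F_k F_{n-k}`. For the closed form `G_n` it suffices to check
this recurrence at the infinitely many points `x = (N-1)/(N+1)`, where
`G_k = (2/(N+1))^k k! R_k` with `R_k = C((k+1)N, k)/(k+1)` the Fuss–Catalan numbers; there it
reduces to the convolution identity of Raney numbers. -/

/-- Labelled binary trees: every node carries a natural-number label and has an
ordered pair of (possibly empty) subtrees. -/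
inductive LBT : Type
  | nil : LBT
  | node : ℕ → LBT → LBT → LBT

/-- The size (number of nodes) of a labelled binary tree. -/
def LBT.size : LBT → ℕ
  | .nil => 0
  | .node _ l r => l.size + r.size + 1

/-- The set of labels appearing in a labelled binary tree. -/
def LBT.labels : LBT → Finset ℕ
  | .nil => ∅
  | .node a l r => insert a (l.labels ∪ r.labels)

/-- `t.rootGt a` holds when `t` is empty or the label of the root of `t` is `> a`. -/
def LBT.rootGt (a : ℕ) : LBT → Prop
  | .nil => True
  | .node b _ _ => a < b

/-- A labelled binary tree is increasing when every non-root node has a label strictly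
larger than the label of its parent. -/
def LBT.Increasing : LBT → Prop
  | .nil => True
  | .node a l r => LBT.rootGt a l ∧ LBT.rootGt a r ∧ l.Increasing ∧ r.Increasing

/-- The product `∏_{v ∈ T} (x · h_T(v) + 1)` over all nodes `v` of a labelled binary
tree `T`, where `h_T(v)` is the number of nodes of the subtree rooted at `v`,
as a polynomial in `ℚ[x]`. -/
noncomputable def LBT.hookProd : LBT → Polynomial ℚ
  | .nil => 1
  | .node a l r =>
      (Polynomial.X * (((LBT.node a l r).size : ℕ) : Polynomial ℚ) + 1) *
        l.hookProd * r.hookProd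

open Finset Polynomial

theorem Nat.mul_choose_sub_one (n k : ℕ) :
    n * (n - 1).choose k = n.choose (k + 1) * (k + 1) := by
  cases n with
  | zero => simp
  | succ n => exact Nat.add_one_mul_choose_eq n k

section Raney

/-- The Raney number `r/(kp+r) · C(kp+r, k)`, written so that no division occurs. -/
def raney (p r : ℕ) : ℕ → ℚ
  | 0 => 1
  | k + 1 => ((k + 1) * p + r).choose (k + 1) - p * ((k + 1) * p + r - 1).choose k

@[simp]
theorem raney_zero_right (p r : ℕ) : raney p r 0 = 1 := rfl

theorem cast_mul_raney (p r k : ℕ) :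
    ((k * p + r : ℕ) : ℚ) * raney p r k = r * (k * p + r).choose k := by
  cases k with
  | zero => simp
  | succ k =>
    have h : (((k + 1) * p + r : ℕ) : ℚ) * ((k + 1) * p + r - 1).choose k
        = ((k + 1) * p + r).choose (k + 1) * (k + 1) := by
      exact_mod_cast Nat.mul_choose_sub_one ((k + 1) * p + r) k
    simp only [raney]
    push_cast at h ⊢
    linear_combination (-(p : ℚ)) * h

theorem raney_zero_succ (p k : ℕ) : raney p 0 (k + 1) = 0 := by
  rcases Nat.eq_zero_or_pos p with rfl | hp
  · simp [raney]
  · have h := cast_mul_raney p 0 (k + 1)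
    simp only [CharP.cast_eq_zero, zero_mul, add_zero] at h
    exact (mul_eq_zero.1 h).resolve_left (by positivity)

theorem raney_succ_succ (p r k : ℕ) :
    raney p (r + 1) (k + 1) = raney p r (k + 1) + raney p (r + p) k := by
  cases k with
  | zero => simp [raney]
  | succ k =>
    obtain ⟨M, hM⟩ : ∃ M, M = (k + 2) * p + r := ⟨_, rfl⟩
    have hpascal : (p : ℚ) * M.choose (k + 1)
        = p * ((M - 1).choose (k + 1) + (M - 1).choose k) := by
      rcases Nat.eq_zero_or_pos p with rfl | hp
      · simp
      · obtain ⟨M', rfl⟩ := Nat.exists_eq_add_one.2 (hM ▸ by positivity : 0 < M)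
        rw [Nat.add_sub_cancel, Nat.choose_succ_succ', add_comm]
        push_cast
        ring
    simp only [raney, show (k + 1 + 1) * p + (r + 1) = M + 1 by subst hM; ring,
      show (k + 1 + 1) * p + r = M by subst hM; ring,
      show (k + 1) * p + (r + p) = M by subst hM; ring, Nat.add_sub_cancel, Nat.choose_succ_succ' M]
    push_cast
    linear_combination -hpascal

theorem sum_antidiagonal_raney_mul_raney (p r s n : ℕ) :
    ∑ ij ∈ antidiagonal n, raney p r ij.1 * raney p s ij.2 = raney p (r + s) n := by
  induction n generalizing r with
  | zero => simp
  | succ n ihn =>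
    induction r with
    | zero => simp [Nat.sum_antidiagonal_succ, raney_zero_succ]
    | succ r ihr =>
      rw [Nat.sum_antidiagonal_succ] at ihr ⊢
      simp only [raney_succ_succ, add_mul, sum_add_distrib, ihn, raney_zero_right, one_mul]
        at ihr ⊢
      rw [show r + 1 + s = r + s + 1 by ring, raney_succ_succ, ← ihr,
        show r + p + s = r + s + p by ring]
      ring

theorem two_mul_succ_mul_raney_self_succ (N n : ℕ) (hN : 0 < N) :
    2 * (n + 1) * raney N N (n + 1) = ((n + 2) * N - n) * raney N (N + N) n := by
  obtain ⟨L, hL⟩ : ∃ L, L = (n + 2) * N := ⟨_, rfl⟩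
  have hLq : (L : ℚ) = (n + 2) * N := by rw [hL]; push_cast; ring
  have hL0 : (L : ℚ) ≠ 0 := by rw [hLq]; positivity
  have h1 := cast_mul_raney N N (n + 1)
  have h2 := cast_mul_raney N (N + N) n
  have h3 : (L.choose (n + 1) : ℚ) * (n + 1) = L.choose n * (L - n) := by
    have hnL : n ≤ L := hL ▸ le_trans (by omega) (Nat.le_mul_of_pos_right (n + 2) hN)
    rw [← Nat.cast_sub hnL]
    exact_mod_cast Nat.choose_succ_right_eq L n
  rw [show (n + 1) * N + N = L by rw [hL]; ring] at h1
  rw [show n * N + (N + N) = L by rw [hL]; ring] at h2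
  apply mul_left_cancel₀ hL0
  push_cast at h1 h2
  linear_combination 2 * (n + 1) * h1 - ((n + 2) * N - n) * h2 + 2 * N * h3
    + 2 * N * L.choose n * hLq

end Raney

section ClosedForm

noncomputable def hookFormula (n : ℕ) : ℚ[X] :=
  C ((n + 1 : ℚ)⁻¹) *
    ∏ i ∈ range n, (((n : ℚ[X]) + 1 + (i : ℚ[X])) * X + ((n : ℚ[X]) + 1 - (i : ℚ[X])))

open Nat

theorem eval_hookFormula (N k : ℕ) (hN : 0 < N) :
    (hookFormula k).eval (((N : ℚ) - 1) / (N + 1)) = (2 / (N + 1)) ^ k * k ! * raney N N k := by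
  have hfactor : ∀ i ∈ range k, ((k : ℚ) + 1 + i) * ((N - 1) / (N + 1)) + (k + 1 - i)
      = 2 / (N + 1) * (((k + 1) * N : ℕ) - i) := by
    intro i _
    push_cast
    field_simp
    ring
  simp only [hookFormula, eval_mul, eval_C, eval_prod, eval_add, eval_sub, eval_X, eval_natCast,
    eval_one]
  rw [prod_congr rfl hfactor, prod_mul_distrib, prod_const, card_range,
    ← descPochhammer_eval_eq_prod_range, descPochhammer_eval_eq_descFactorial,
    descFactorial_eq_factorial_mul_choose]
  have h := cast_mul_raney N N k
  rw [show k * N + N = (k + 1) * N by ring] at h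
  have hN0 : (N : ℚ) ≠ 0 := by positivity
  have hraney : ((k : ℚ) + 1) * raney N N k = ((k + 1) * N).choose k :=
    mul_left_cancel₀ hN0 (by push_cast at h; linear_combination h)
  have hR : raney N N k = ((k + 1) * N).choose k / ((k : ℚ) + 1) := by
    rw [eq_div_iff (by positivity)]
    linear_combination hraney
  rw [hR]
  push_cast
  ring

theorem eval_hookFormula_succ (N n : ℕ) (hN : 0 < N) :
    ((X * ((n + 1 : ℕ) : ℚ[X]) + 1) *
        ∑ k ∈ range (n + 1), (n.choose k : ℚ[X]) * hookFormula k * hookFormula (n - k)).eval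
          (((N : ℚ) - 1) / (N + 1))
      = (hookFormula (n + 1)).eval (((N : ℚ) - 1) / (N + 1)) := by
  set c : ℚ := 2 / (N + 1)
  have hterm : ∀ k ∈ range (n + 1), (n.choose k : ℚ) * (c ^ k * k ! * raney N N k) *
      (c ^ (n - k) * (n - k)! * raney N N (n - k))
        = c ^ n * n ! * (raney N N k * raney N N (n - k)) := by
    intro k hk
    have hkn : k ≤ n := Nat.lt_succ_iff.1 (mem_range.1 hk)
    have hfact : (n.choose k : ℚ) * k ! * (n - k)! = n ! := by
      exact_mod_cast choose_mul_factorial_mul_factorial hkn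
    rw [← hfact, ← Nat.add_sub_cancel' hkn, pow_add]
    simp only [Nat.add_sub_cancel_left]
    ring
  have hpoint : ((N : ℚ) - 1) / (N + 1) * (n + 1) + 1 = c / 2 * ((n + 2) * N - n) := by
    simp only [c]
    field_simp
    ring
  simp only [eval_mul, eval_add, eval_one, eval_X, eval_natCast, eval_finsetSum,
    eval_hookFormula N _ hN]
  rw [sum_congr rfl hterm, ← mul_sum, ← sum_antidiagonal_eq_sum_range_succ_mk
    (fun ij => raney N N ij.1 * raney N N ij.2), sum_antidiagonal_raney_mul_raney]
  push_cast
  rw [hpoint, factorial_succ, pow_succ]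
  push_cast
  linear_combination (-(c ^ n * n ! * c / 2)) * two_mul_succ_mul_raney_self_succ N n hN

theorem hookFormula_succ (n : ℕ) :
    (X * ((n + 1 : ℕ) : ℚ[X]) + 1) *
        ∑ k ∈ range (n + 1), (n.choose k : ℚ[X]) * hookFormula k * hookFormula (n - k)
      = hookFormula (n + 1) := by
  apply eq_of_infinite_eval_eq
  refine Set.infinite_of_injective_forall_mem
    (f := fun N : ℕ => (((N + 1 : ℕ) : ℚ) - 1) / ((N + 1 : ℕ) + 1)) ?_
    fun N => eval_hookFormula_succ (N + 1) n N.succ_pos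
  intro a b hab
  rw [div_eq_div_iff (by positivity) (by positivity)] at hab
  push_cast at hab
  exact_mod_cast (by linarith : (a : ℚ) = b)

end ClosedForm

namespace LBT

def IsIncreasingOn (S : Finset ℕ) (t : LBT) : Prop :=
  t.size = S.card ∧ t.labels = S ∧ t.Increasing

theorem card_labels_le_size : ∀ t : LBT, t.labels.card ≤ t.size
  | nil => le_rfl
  | node a l r => by
    have := card_insert_le a (l.labels ∪ r.labels)
    have := card_union_le l.labels r.labels
    have := card_labels_le_size l
    have := card_labels_le_size r
    simp only [labels, size]
    omega

theorem lt_of_mem_labels {a : ℕ} : ∀ {t : LBT}, t.rootGt a → t.Increasing →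
    ∀ {b : ℕ}, b ∈ t.labels → a < b
  | nil, _, _, _, hb => by simp [labels] at hb
  | node c l r, hac, ⟨hl, hr, il, ir⟩, b, hb => by
    simp only [labels, mem_insert, mem_union] at hb
    rcases hb with rfl | hb | hb
    · exact hac
    · exact hac.trans (lt_of_mem_labels hl il hb)
    · exact hac.trans (lt_of_mem_labels hr ir hb)

theorem rootGt_of_forall_lt {a : ℕ} : ∀ {t : LBT}, (∀ b ∈ t.labels, a < b) → t.rootGt a
  | nil, _ => trivial
  | node _ _ _, h => h _ (mem_insert_self _ _)

theorem finite_setOf_size_le_labels_subset (S : Finset ℕ) (n : ℕ) :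
    {t : LBT | t.size ≤ n ∧ t.labels ⊆ S}.Finite := by
  induction n with
  | zero =>
    refine (Set.finite_singleton nil).subset ?_
    rintro (_ | ⟨a, l, r⟩) ⟨h, -⟩
    · rfl
    · simp [size] at h
  | succ n ih =>
    refine ((S.finite_toSet.prod (ih.prod ih)).image
      (fun x : ℕ × LBT × LBT => node x.1 x.2.1 x.2.2)).insert nil |>.subset ?_
    rintro (_ | ⟨a, l, r⟩) ⟨hsize, hlabels⟩
    · exact Set.mem_insert _ _
    · simp only [size] at hsize
      simp only [labels, insert_subset_iff, union_subset_iff] at hlabels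
      exact Set.mem_insert_of_mem _
        ⟨(a, l, r), ⟨hlabels.1, ⟨(by omega : l.size ≤ n), hlabels.2.1⟩,
          ⟨(by omega : r.size ≤ n), hlabels.2.2⟩⟩, rfl⟩

theorem finite_setOf_isIncreasingOn (S : Finset ℕ) : {t : LBT | t.IsIncreasingOn S}.Finite :=
  (finite_setOf_size_le_labels_subset S S.card).subset fun _ ⟨hsize, hlabels, _⟩ =>
    ⟨hsize.le, hlabels.le⟩

noncomputable def incTrees (S : Finset ℕ) : Finset LBT :=
  (finite_setOf_isIncreasingOn S).toFinset

@[simp]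
theorem mem_incTrees {S : Finset ℕ} {t : LBT} : t ∈ incTrees S ↔ t.IsIncreasingOn S :=
  Set.Finite.mem_toFinset _

theorem isIncreasingOn_empty_iff {t : LBT} : t.IsIncreasingOn ∅ ↔ t = nil := by
  constructor
  · rintro ⟨hsize, -, -⟩
    cases t with
    | nil => rfl
    | node a l r => simp [size] at hsize
  · rintro rfl
    exact ⟨rfl, rfl, trivial⟩

theorem IsIncreasingOn.node {a : ℕ} {A E : Finset ℕ} {l r : LBT} (ha : ∀ b ∈ E, a < b)
    (hA : A ⊆ E) (hl : l.IsIncreasingOn A) (hr : r.IsIncreasingOn (E \ A)) :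
    (LBT.node a l r).IsIncreasingOn (insert a E) := by
  obtain ⟨hlsize, rfl, il⟩ := hl
  obtain ⟨hrsize, hrlabels, ir⟩ := hr
  have haE : a ∉ E := fun h => lt_irrefl a (ha a h)
  refine ⟨?_, ?_, rootGt_of_forall_lt fun b hb => ha b (hA hb),
    rootGt_of_forall_lt fun b hb => ha b (sdiff_subset (hrlabels ▸ hb)), il, ir⟩
  · rw [size, hlsize, hrsize, card_insert_of_notMem haE, ← card_sdiff_add_card_eq_card hA]
    ring
  · rw [labels, hrlabels, union_sdiff_of_subset hA]

theorem IsIncreasingOn.exists_node {a : ℕ} {E : Finset ℕ} (ha : ∀ b ∈ E, a < b) {t : LBT}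
    (ht : t.IsIncreasingOn (insert a E)) :
    ∃ l r, t = LBT.node a l r ∧ l.labels ⊆ E ∧ l.IsIncreasingOn l.labels ∧
      r.IsIncreasingOn (E \ l.labels) := by
  obtain ⟨hsize, hlabels, hinc⟩ := ht
  have haE : a ∉ E := fun h => lt_irrefl a (ha a h)
  cases t with
  | nil => simp [size, card_insert_of_notMem haE] at hsize
  | node b l r =>
    obtain ⟨hl, hr, il, ir⟩ := hinc
    simp only [labels] at hlabels
    have hb : ∀ c ∈ l.labels ∪ r.labels, b < c := by
      simp only [mem_union]
      rintro c (hc | hc)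
      exacts [lt_of_mem_labels hl il hc, lt_of_mem_labels hr ir hc]
    have hab : b = a := by
      have h1 : b ∈ insert a E := hlabels ▸ mem_insert_self _ _
      have h2 : a ∈ insert b (l.labels ∪ r.labels) := hlabels ▸ mem_insert_self _ _
      rw [mem_insert] at h1 h2
      rcases h1 with h1 | h1
      · exact h1
      · rcases h2 with h2 | h2
        · exact h2.symm
        · exact absurd (ha b h1) (hb a h2).asymm
    subst hab
    have hbLR : b ∉ l.labels ∪ r.labels := fun h => lt_irrefl b (hb b h)
    have hunion : l.labels ∪ r.labels = E := by
      rw [← erase_insert hbLR, ← erase_insert haE]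
      exact congrArg (·.erase b) hlabels
    have hinter := card_union_add_card_inter l.labels r.labels
    have := card_labels_le_size l
    have := card_labels_le_size r
    rw [← hunion, card_insert_of_notMem hbLR] at hsize
    simp only [size] at hsize
    have hdisj : Disjoint l.labels r.labels := disjoint_iff_inter_eq_empty.2
      (card_eq_zero.1 (by omega))
    have hsdiff : E \ l.labels = r.labels := by rw [← hunion, union_sdiff_cancel_left hdisj]
    exact ⟨l, r, rfl, hunion ▸ subset_union_left, ⟨by omega, rfl, il⟩,
      ⟨by rw [hsdiff]; omega, hsdiff.symm, ir⟩⟩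

noncomputable def hookSum (S : Finset ℕ) : ℚ[X] :=
  ∑ t ∈ incTrees S, t.hookProd

theorem hookSum_empty : hookSum ∅ = 1 := by
  have : incTrees ∅ = {nil} := by
    ext t
    rw [mem_incTrees, isIncreasingOn_empty_iff, mem_singleton]
  rw [hookSum, this, sum_singleton, hookProd]

theorem hookSum_insert {a : ℕ} {E : Finset ℕ} (ha : ∀ b ∈ E, a < b) :
    hookSum (insert a E) = (X * ((insert a E).card : ℚ[X]) + 1) *
      ∑ A ∈ E.powerset, hookSum A * hookSum (E \ A) := by
  have hnode : hookSum (insert a E) =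
      ∑ x ∈ E.powerset.sigma fun A => incTrees A ×ˢ incTrees (E \ A),
        (LBT.node a x.2.1 x.2.2).hookProd := by
    refine (sum_bij (fun x _ => LBT.node a x.2.1 x.2.2) ?_ ?_ ?_ fun _ _ => rfl).symm
    · rintro ⟨A, l, r⟩ hx
      simp only [mem_sigma, mem_powerset, mem_product, mem_incTrees] at hx
      exact mem_incTrees.2 (hx.2.1.node ha hx.1 hx.2.2)
    · rintro ⟨A, l, r⟩ hx ⟨A', l', r'⟩ hx' h
      simp only [mem_sigma, mem_product, mem_incTrees] at hx hx'
      obtain ⟨rfl, rfl⟩ : l = l' ∧ r = r' := by simpa using h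
      rw [← hx.2.1.2.1, ← hx'.2.1.2.1]
    · intro t ht
      obtain ⟨l, r, rfl, hsub, hl, hr⟩ := (mem_incTrees.1 ht).exists_node ha
      exact ⟨⟨l.labels, l, r⟩, by simpa [hsub] using ⟨hl, hr⟩, rfl⟩
  rw [hnode, sum_sigma, mul_sum]
  refine sum_congr rfl fun A hA => ?_
  rw [hookSum, hookSum, sum_mul_sum, ← sum_product', mul_sum]
  refine sum_congr rfl fun x hx => ?_
  simp only [mem_powerset, mem_product, mem_incTrees] at hA hx
  rw [hookProd, (hx.1.node ha hA hx.2).1, mul_assoc]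

theorem hookSum_eq_hookFormula (S : Finset ℕ) : hookSum S = hookFormula S.card := by
  induction S using Finset.strongInduction with
  | H S ih =>
  rcases S.eq_empty_or_nonempty with rfl | hS
  · simp [hookSum_empty, hookFormula]
  set m := S.min' hS
  set E := S.erase m
  have hES : E ⊂ S := erase_ssubset (S.min'_mem hS)
  have hterm : ∀ A ∈ E.powerset,
      hookSum A * hookSum (E \ A) = hookFormula A.card * hookFormula (E.card - A.card) := by
    intro A hA
    rw [ih A ((mem_powerset.1 hA).trans_ssubset hES), ih (E \ A) (sdiff_subset.trans_ssubset hES),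
      card_sdiff_of_subset (mem_powerset.1 hA)]
  have hsum : ∑ A ∈ E.powerset, hookSum A * hookSum (E \ A)
      = ∑ k ∈ range (E.card + 1),
          (E.card.choose k : ℚ[X]) * hookFormula k * hookFormula (E.card - k) := by
    rw [sum_congr rfl hterm,
      sum_powerset_apply_card (fun k => hookFormula k * hookFormula (E.card - k))]
    simp only [nsmul_eq_mul, mul_assoc]
  rw [← insert_erase (S.min'_mem hS),
    hookSum_insert fun b hb => S.min'_lt_of_mem_erase_min' hS hb, hsum,
    card_insert_of_notMem (notMem_erase _ _), hookFormula_succ]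

end LBT

theorem stmt6_general (n : ℕ) :
    ∑ᶠ (t : LBT) (_ : t.size = n ∧ t.labels = Finset.Icc 1 n ∧ t.Increasing), t.hookProd
      = Polynomial.C ((n + 1 : ℚ)⁻¹) *
          ∏ i ∈ Finset.range n,
            (((n : Polynomial ℚ) + 1 + (i : Polynomial ℚ)) * Polynomial.X +
              ((n : Polynomial ℚ) + 1 - (i : Polynomial ℚ))) := by
  have hpred : ∀ t : LBT, (t.size = n ∧ t.labels = Icc 1 n ∧ t.Increasing)
      = t.IsIncreasingOn (Icc 1 n) := by
    simp [LBT.IsIncreasingOn]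
  calc ∑ᶠ (t : LBT) (_ : t.size = n ∧ t.labels = Icc 1 n ∧ t.Increasing), t.hookProd
      = ∑ᶠ (t : LBT) (_ : t.IsIncreasingOn (Icc 1 n)), t.hookProd :=
        finsum_congr fun t => by rw [hpred t]
    _ = LBT.hookSum (Icc 1 n) :=
        finsum_mem_eq_finite_toFinset_sum _ (LBT.finite_setOf_isIncreasingOn _)
    _ = hookFormula n := by rw [LBT.hookSum_eq_hookFormula, Nat.card_Icc, Nat.add_sub_cancel]

/-- Postnikov/Du–Liu/Lascoux hook formula: for every `n ≥ 1`, the sum over all increasing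
binary trees `T` with `n` nodes (labelled bijectively by `{1, …, n}`, children having
larger labels than their parents) of `∏_{v ∈ T} (x · h_T(v) + 1)` equals
`(1/(n+1)) · ∏_{i=0}^{n−1} ((n+1+i)·x + n+1−i)`, as an identity in `ℚ[x]`. -/
theorem stmt6 (n : ℕ) (hn : 1 ≤ n) :
    ∑ᶠ (t : LBT) (_ : t.size = n ∧ t.labels = Finset.Icc 1 n ∧ t.Increasing), t.hookProd
      = Polynomial.C ((n + 1 : ℚ)⁻¹) *
          ∏ i ∈ Finset.range n,
            (((n : Polynomial ℚ) + 1 + (i : Polynomial ℚ)) * Polynomial.X +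
              ((n : Polynomial ℚ) + 1 - (i : Polynomial ℚ))) :=
  stmt6_general n
end

section
/- For every integer n ≥ 1, the sum over all binary trees T with n nodes of the product ∏_{v ∈ T} 1/h_T(v) equals 1, as an identity in ℚ. -/
/-- Binary trees: every node has an ordered pair of (possibly empty) subtrees. -/
inductive BT : Type
  | nil : BT
  | node : BT → BT → BT

/-- The size (number of nodes) of a binary tree. -/
def BT.size : BT → ℕ
  | .nil => 0
  | .node l r => l.size + r.size + 1

/-- The product `∏_{v ∈ T} 1 / h_T(v)` over all nodes `v` of a binary tree `T`,
where `h_T(v)` is the number of nodes of the subtree rooted at `v`. -/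
def BT.hprod : BT → ℚ
  | .nil => 1
  | .node l r => (1 / ((BT.node l r).size : ℚ)) * l.hprod * r.hprod


/-!
Removing the root of a tree of size `n + 1` leaves an ordered pair of subtrees of sizes
`i + j = n`, and the root contributes the factor `1 / (n + 1)` to the hook product. So by
strong induction on `n` each of the `n + 1` splittings `(i, j)` contributes `1 / (n + 1)`.
-/

deriving instance DecidableEq for BT

namespace BT

open Finset

def ofSize : ℕ → Finset BT
  | 0 => {nil}
  | n + 1 => (antidiagonal n).attach.biUnion fun p =>
      (ofSize p.1.1 ×ˢ ofSize p.1.2).image fun lr => node lr.1 lr.2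
  decreasing_by
    all_goals have := mem_antidiagonal.mp p.2; omega

theorem mem_ofSize {n : ℕ} {T : BT} : T ∈ ofSize n ↔ T.size = n := by
  induction T generalizing n with
  | nil => cases n <;> simp [ofSize, size]
  | node l r ihl ihr =>
    cases n with
    | zero => simp [ofSize, size]
    | succ n => simp [ofSize, size, ihl, ihr]

theorem sum_ofSize_succ {M : Type*} [AddCommMonoid M] (f : BT → M) (n : ℕ) :
    ∑ T ∈ ofSize (n + 1), f T =
      ∑ p ∈ antidiagonal n, ∑ l ∈ ofSize p.1, ∑ r ∈ ofSize p.2, f (node l r) := by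
  rw [ofSize, sum_biUnion, ← sum_attach (antidiagonal n)]
  · refine sum_congr rfl fun p _ => ?_
    rw [sum_image, sum_product]
    intro x _ y _ h
    simpa [Prod.ext_iff] using h
  · intro p _ q _ hpq
    simp only [Function.onFun, disjoint_left, mem_image, mem_product, mem_ofSize,
      Prod.exists]
    rintro _ ⟨l, r, ⟨hl, hr⟩, rfl⟩ ⟨l', r', ⟨hl', hr'⟩, h⟩
    obtain ⟨rfl, rfl⟩ := node.inj h
    have hp := mem_antidiagonal.mp p.2
    have hq := mem_antidiagonal.mp q.2
    exact hpq (Subtype.ext (Prod.ext (by omega) (by omega)))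

theorem hprod_node (l r : BT) :
    (node l r).hprod = l.hprod * r.hprod / (l.size + r.size + 1) := by
  simp only [hprod, size]
  push_cast
  ring

theorem sum_hprod_ofSize (n : ℕ) : ∑ T ∈ ofSize n, T.hprod = 1 := by
  induction n using Nat.strong_induction_on with
  | _ n ih =>
  cases n with
  | zero => simp [ofSize, hprod]
  | succ n =>
    calc ∑ T ∈ ofSize (n + 1), T.hprod
        = ∑ p ∈ antidiagonal n,
            (∑ l ∈ ofSize p.1, l.hprod) * (∑ r ∈ ofSize p.2, r.hprod) / (n + 1) := by
          rw [sum_ofSize_succ]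
          refine sum_congr rfl fun p hp => ?_
          simp only [sum_mul_sum, sum_div]
          refine sum_congr rfl fun l hl => sum_congr rfl fun r hr => ?_
          have hpn : (p.1 + p.2 : ℚ) = n := by exact_mod_cast mem_antidiagonal.mp hp
          rw [hprod_node, mem_ofSize.mp hl, mem_ofSize.mp hr, hpn]
      _ = ∑ _p ∈ antidiagonal n, 1 / (n + 1 : ℚ) := by
          refine sum_congr rfl fun p hp => ?_
          have hpn := mem_antidiagonal.mp hp
          rw [ih p.1 (by omega), ih p.2 (by omega), one_mul]
      _ = 1 := by
          rw [sum_const, Nat.card_antidiagonal, nsmul_eq_mul]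
          push_cast
          field_simp

end BT

theorem stmt7_general (n : ℕ) :
    ∑ᶠ (T : BT) (_ : T.size = n), T.hprod = 1 := by
  have := finsum_mem_coe_finset BT.hprod (BT.ofSize n)
  simp only [Finset.mem_coe, BT.mem_ofSize, BT.sum_hprod_ofSize] at this
  exact this

/-- The hook sum formula: for every `n ≥ 1`, the sum over all binary trees `T` with
`n` nodes of `∏_{v ∈ T} 1 / h_T(v)` equals `1`. -/
theorem stmt7 (n : ℕ) (hn : 1 ≤ n) :
    ∑ᶠ (T : BT) (_ : T.size = n), T.hprod = 1 :=
  stmt7_general n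
end

section
/- Let T be a rooted tree on a finite vertex set V with |V| = n ≥ 1, given by a parent function p : V ∖ {root} → V such that iterating p from any vertex reaches the root. Then the number of bijections ℓ : V → {1,…,n} such that ℓ(p(v)) < ℓ(v) for every non-root vertex v (increasing labellings of T) equals n! / ∏_{v ∈ V} h_T(v). -/
/-!
The formula holds more generally for rooted forests, whose roots are the fixed points of `p`.
The smallest label of an increasing labelling sits on a root `r`, and deleting `r` leaves a
forest on the other vertices with the same hooks. Hence the number `f F` of increasing
labellings satisfies `f F = ∑ r, f (F - r)` over the roots `r`, and by induction on the number
`n` of vertices `f F * ∏ v, h v = ∑ r, h r * (n - 1)! = n!`, because the hooks of the roots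
partition the vertex set.
-/

open Finset Function
open scoped Classical Nat

section Forest

variable {V : Type*} {p : V → V} {r : V}

def IsRootedForest (p : V → V) : Prop :=
  ∀ v, ∃ m, IsFixedPt p (p^[m] v)

def IsIncreasingLabelling {α : Type*} [LT α] (p : V → V) (ℓ : V → α) : Prop :=
  ∀ v, p v ≠ v → ℓ (p v) < ℓ v

/-- Deleting the root `r`: its children become roots, i.e. fixed points. -/
noncomputable def removeRoot (p : V → V) (r : V) (v : {x // x ≠ r}) : {x // x ≠ r} :=
  if h : p v = r then v else ⟨p v, h⟩

theorem removeRoot_of_eq {v : {x // x ≠ r}} (h : p v = r) : removeRoot p r v = v :=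
  dif_pos h

theorem removeRoot_of_ne {v : {x // x ≠ r}} (h : p v ≠ r) : removeRoot p r v = ⟨p v, h⟩ :=
  dif_neg h

theorem iterate_removeRoot_of_iterate_eq (hr : IsFixedPt p r) {v : {x // x ≠ r}} :
    ∀ {m : ℕ} {u : {x // x ≠ r}}, p^[m] u = v → (removeRoot p r)^[m] u = v
  | 0, _, h => Subtype.ext h
  | m + 1, u, h => by
    rw [iterate_succ_apply] at h ⊢
    have hpu : p u ≠ r := fun hpu => v.2 (by rw [← h, hpu, iterate_fixed hr])
    rw [removeRoot_of_ne hpu]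
    exact iterate_removeRoot_of_iterate_eq hr h

theorem exists_iterate_eq_of_iterate_removeRoot {v : V} :
    ∀ {m : ℕ} {u : {x // x ≠ r}}, ((removeRoot p r)^[m] u : V) = v → ∃ k, p^[k] u = v
  | 0, _, h => ⟨0, h⟩
  | m + 1, u, h => by
    rw [iterate_succ_apply] at h
    obtain ⟨k, hk⟩ := exists_iterate_eq_of_iterate_removeRoot h
    by_cases hpu : p u = r
    · rw [removeRoot_of_eq hpu] at hk
      exact ⟨k, hk⟩
    · rw [removeRoot_of_ne hpu] at hk
      exact ⟨k + 1, by rwa [iterate_succ_apply]⟩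

theorem exists_iterate_removeRoot_eq_iff (hr : IsFixedPt p r) {u v : {x // x ≠ r}} :
    (∃ m, (removeRoot p r)^[m] u = v) ↔ ∃ m, p^[m] u = v :=
  ⟨fun ⟨_, h⟩ => exists_iterate_eq_of_iterate_removeRoot (congrArg Subtype.val h),
    fun ⟨_, h⟩ => ⟨_, iterate_removeRoot_of_iterate_eq hr h⟩⟩

theorem isRootedForest_removeRoot (hp : IsRootedForest p) (r : V) :
    IsRootedForest (removeRoot p r) := by
  suffices h : ∀ (m : ℕ) (u : {x // x ≠ r}), IsFixedPt p (p^[m] u) →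
      ∃ k, IsFixedPt (removeRoot p r) ((removeRoot p r)^[k] u) from
    fun u => (hp u).elim fun m => h m u
  intro m
  induction m with
  | zero =>
    intro u hu
    have hpu : p u ≠ r := by rw [show p u = u from hu]; exact u.2
    exact ⟨0, (removeRoot_of_ne hpu).trans (Subtype.ext hu)⟩
  | succ m ih =>
    intro u hu
    by_cases hpu : p u = r
    · exact ⟨0, removeRoot_of_eq hpu⟩
    · obtain ⟨k, hk⟩ := ih ⟨p u, hpu⟩ (by rwa [iterate_succ_apply] at hu)
      exact ⟨k + 1, by rwa [iterate_succ_apply, removeRoot_of_ne hpu]⟩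

theorem Function.IsFixedPt.eq_of_iterate_eq (hr : IsFixedPt p r) {u s : V} {a b : ℕ} (hab : a ≤ b)
    (ha : p^[a] u = r) (hb : p^[b] u = s) : s = r := by
  rw [← hb, ← Nat.sub_add_cancel hab, iterate_add_apply, ha, iterate_fixed hr]

end Forest

section Hook

variable {V : Type*} [Fintype V] {p : V → V} {r : V}

noncomputable def hook (p : V → V) (v : V) : Finset V :=
  univ.filter fun u => ∃ m, p^[m] u = v

theorem mem_hook {u v : V} : u ∈ hook p v ↔ ∃ m, p^[m] u = v := by
  simp [hook]

theorem self_mem_hook (v : V) : v ∈ hook p v :=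
  mem_hook.2 ⟨0, rfl⟩

theorem card_hook_removeRoot [DecidableEq V] (hr : IsFixedPt p r) (v : {x // x ≠ r}) :
    (hook (removeRoot p r) v).card = (hook p v).card := by
  rw [← card_map (Embedding.subtype _)]
  congr 1
  ext u
  simp only [mem_map, mem_hook, Embedding.subtype_apply]
  constructor
  · rintro ⟨u, hu, rfl⟩
    exact (exists_iterate_removeRoot_eq_iff hr).1 hu
  · intro hu
    have hur : u ≠ r := by
      rintro rfl
      obtain ⟨m, hm⟩ := hu
      exact v.2 (by rw [← hm, iterate_fixed hr])
    exact ⟨⟨u, hur⟩, (exists_iterate_removeRoot_eq_iff hr).2 hu, rfl⟩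

theorem sum_card_hook_fixedPoints [DecidableEq V] (hp : IsRootedForest p) :
    ∑ r ∈ univ.filter (IsFixedPt p), (hook p r).card = Fintype.card V := by
  rw [← card_biUnion, ← card_univ]
  · congr 1
    refine eq_univ_of_forall fun u => ?_
    obtain ⟨m, hm⟩ := hp u
    exact mem_biUnion.2 ⟨_, mem_filter.2 ⟨mem_univ _, hm⟩, mem_hook.2 ⟨m, rfl⟩⟩
  · intro r hr s hs hrs
    refine disjoint_left.2 fun u hur hus => hrs ?_
    obtain ⟨a, ha⟩ := mem_hook.1 hur
    obtain ⟨b, hb⟩ := mem_hook.1 hus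
    rcases le_total a b with hab | hba
    · exact (IsFixedPt.eq_of_iterate_eq (mem_filter.1 hr).2 hab ha hb).symm
    · exact IsFixedPt.eq_of_iterate_eq (mem_filter.1 hs).2 hba hb ha

end Hook

section Labelling

variable {V : Type*} [DecidableEq V] {p : V → V} {r : V} {n : ℕ}

/-- Restriction to the vertices other than `r`, with all labels shifted down by one. -/
noncomputable def restrictLabelling (n : ℕ) (r : V) :
    {ℓ : V ≃ Fin (n + 1) // ℓ r = 0} ≃ ({x // x ≠ r} ≃ Fin n) :=
  (Equiv.subtypeEquiv ((Equiv.symmEquiv _ _).trans ((finSuccEquiv n).equivCongr (Equiv.refl V)))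
      fun ℓ => by simpa [eq_comm] using ℓ.symm_apply_eq.symm).trans
    ((Equiv.optionSubtype r).trans (Equiv.symmEquiv _ _))

theorem succ_restrictLabelling_apply (ℓ : {ℓ : V ≃ Fin (n + 1) // ℓ r = 0}) (x : {x // x ≠ r}) :
    (restrictLabelling n r ℓ x).succ = ℓ.1 x := by
  have hsymm : ∀ i, ((restrictLabelling n r ℓ).symm i : V) = ℓ.1.symm i.succ := by
    simp [restrictLabelling]
  conv_rhs => rw [← (restrictLabelling n r ℓ).symm_apply_apply x]
  rw [hsymm, Equiv.apply_symm_apply]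

theorem isIncreasingLabelling_restrictLabelling_iff (hr : IsFixedPt p r)
    (ℓ : {ℓ : V ≃ Fin (n + 1) // ℓ r = 0}) :
    IsIncreasingLabelling (removeRoot p r) (restrictLabelling n r ℓ) ↔
      IsIncreasingLabelling p ℓ.1 := by
  have hlabel (x : V) (hx : x ≠ r) : ℓ.1 x = (restrictLabelling n r ℓ ⟨x, hx⟩).succ :=
    (succ_restrictLabelling_apply ℓ ⟨x, hx⟩).symm
  constructor
  · intro h v hv
    have hvr : v ≠ r := by rintro rfl; exact hv hr
    by_cases hpv : p v = r
    · rw [hpv, ℓ.2, Fin.pos_iff_ne_zero]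
      exact ne_of_ne_of_eq (ℓ.1.injective.ne hvr) ℓ.2
    · have hlt := h ⟨v, hvr⟩ (by
        rw [removeRoot_of_ne hpv]
        exact fun e => hv (congrArg Subtype.val e))
      rw [removeRoot_of_ne hpv] at hlt
      rw [hlabel v hvr, hlabel (p v) hpv]
      exact Fin.succ_lt_succ_iff.2 hlt
  · intro h v hv
    have hpv : p v ≠ r := fun e => hv (removeRoot_of_eq e)
    rw [removeRoot_of_ne hpv] at hv ⊢
    have hlt := h v fun e => hv (Subtype.ext e)
    rw [hlabel v v.2, hlabel (p v) hpv] at hlt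
    exact Fin.succ_lt_succ_iff.1 hlt

theorem IsIncreasingLabelling.isFixedPt_symm_zero {ℓ : V ≃ Fin (n + 1)}
    (h : IsIncreasingLabelling p ℓ) : IsFixedPt p (ℓ.symm 0) := by
  by_contra hne
  have hlt := h _ hne
  rw [ℓ.apply_symm_apply] at hlt
  exact Fin.not_lt_zero _ hlt

variable [Fintype V]

theorem card_isIncreasingLabelling_succ :
    Fintype.card {ℓ : V ≃ Fin (n + 1) // IsIncreasingLabelling p ℓ} =
      ∑ r ∈ univ.filter (IsFixedPt p),
        Fintype.card {ℓ : {x // x ≠ r} ≃ Fin n // IsIncreasingLabelling (removeRoot p r) ℓ} := by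
  rw [Fintype.card_subtype, card_eq_sum_card_fiberwise (f := fun ℓ => ℓ.symm 0)
    (t := univ.filter (IsFixedPt p)) fun ℓ hℓ => by
      simpa using (mem_filter.1 hℓ).2.isFixedPt_symm_zero]
  refine sum_congr rfl fun r hr => ?_
  rw [filter_filter, ← Fintype.card_subtype]
  exact Fintype.card_congr <| calc
    {ℓ : V ≃ Fin (n + 1) // IsIncreasingLabelling p ℓ ∧ ℓ.symm 0 = r}
      ≃ {ℓ : V ≃ Fin (n + 1) // ℓ r = 0 ∧ IsIncreasingLabelling p ℓ} :=
        Equiv.subtypeEquivRight fun ℓ => by rw [Equiv.symm_apply_eq, eq_comm, and_comm]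
    _ ≃ {ℓ : {ℓ : V ≃ Fin (n + 1) // ℓ r = 0} // IsIncreasingLabelling p ℓ.1} :=
        (Equiv.subtypeSubtypeEquivSubtypeInter _ _).symm
    _ ≃ _ := Equiv.subtypeEquiv (restrictLabelling n r) fun ℓ =>
        (isIncreasingLabelling_restrictLabelling_iff (mem_filter.1 hr).2 ℓ).symm

theorem card_isIncreasingLabelling_mul_prod_card_hook (hp : IsRootedForest p)
    (hcard : Fintype.card V = n) :
    Fintype.card {ℓ : V ≃ Fin n // IsIncreasingLabelling p ℓ} * ∏ v, (hook p v).card = n ! := by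
  induction n generalizing V with
  | zero =>
    have := Fintype.card_eq_zero_iff.1 hcard
    simp only [univ_eq_empty, prod_empty, mul_one, Nat.factorial_zero]
    exact Fintype.card_eq_one_iff.2
      ⟨⟨Equiv.equivOfIsEmpty _ _, isEmptyElim⟩, fun ℓ => Subtype.ext (Equiv.ext isEmptyElim)⟩
  | succ n ih =>
    calc _ = ∑ r ∈ univ.filter (IsFixedPt p), (hook p r).card *
            (Fintype.card {ℓ : {x // x ≠ r} ≃ Fin n // IsIncreasingLabelling (removeRoot p r) ℓ} *
              ∏ v, (hook (removeRoot p r) v).card) := by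
          rw [card_isIncreasingLabelling_succ, sum_mul]
          refine sum_congr rfl fun r hr => ?_
          simp only [Fintype.prod_eq_mul_prod_subtype_ne _ r,
            card_hook_removeRoot (mem_filter.1 hr).2]
          ring
      _ = ∑ r ∈ univ.filter (IsFixedPt p), (hook p r).card * n ! := by
          refine sum_congr rfl fun r _ => ?_
          rw [ih (isRootedForest_removeRoot hp r) (by simp [Fintype.card_subtype_compl, hcard])]
      _ = (n + 1)! := by
          rw [← sum_mul, sum_card_hook_fixedPoints hp, hcard, Nat.factorial_succ]

end Labelling

theorem stmt8_general {V : Type*} [Fintype V] [DecidableEq V] (n : ℕ)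
    (hcard : Fintype.card V = n) (root : V) (p : V → V) (hroot : p root = root)
    (hreach : ∀ v, ∃ m, p^[m] v = root) :
    (Fintype.card {ℓ : V ≃ Fin n // ∀ v, v ≠ root → ℓ (p v) < ℓ v} : ℚ)
      = (n.factorial : ℚ) /
          ∏ v : V, ((Finset.univ.filter fun u => ∃ m, p^[m] u = v).card : ℚ) := by
  have hp : IsRootedForest p := fun v => (hreach v).imp fun m hm => by rw [hm]; exact hroot
  have hroot_iff (v : V) : v ≠ root ↔ p v ≠ v := by
    refine ⟨fun hv hpv => hv ?_, fun hpv hv => hpv (hv ▸ hroot)⟩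
    obtain ⟨m, hm⟩ := hreach v
    rwa [iterate_fixed hpv] at hm
  have hprod : ∏ v, ((hook p v).card : ℚ) ≠ 0 :=
    prod_ne_zero_iff.2 fun v _ => Nat.cast_ne_zero.2 (card_ne_zero_of_mem (self_mem_hook v))
  have hcount : Fintype.card {ℓ : V ≃ Fin n // ∀ v, v ≠ root → ℓ (p v) < ℓ v} =
      Fintype.card {ℓ : V ≃ Fin n // IsIncreasingLabelling p ℓ} :=
    Fintype.card_congr <| Equiv.subtypeEquivRight fun ℓ =>
      forall_congr' fun v => imp_congr_left (hroot_iff v)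
  rw [hcount]
  refine (eq_div_iff hprod).2 ?_
  exact_mod_cast card_isIncreasingLabelling_mul_prod_card_hook hp hcard

/-- Knuth's hook length formula for rooted trees: if `T` is a rooted tree on a finite
vertex set `V` with `n ≥ 1` vertices, given by a parent function `p` (fixing the root,
and such that iterating `p` from any vertex reaches the root), then the number of
increasing labellings of `T` — bijections `ℓ : V → {1, …, n}` with `ℓ(p(v)) < ℓ(v)`
for every non-root vertex `v` — equals `n! / ∏_{v ∈ V} h_T(v)`, where
`h_T(v)` is the number of elements of the hook of `v` (the set of `v` and its
descendants). -/
theorem stmt8 {V : Type*} [Fintype V] [DecidableEq V] (n : ℕ) (hn : 1 ≤ n)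
    (hcard : Fintype.card V = n) (root : V) (p : V → V) (hroot : p root = root)
    (hreach : ∀ v, ∃ m, p^[m] v = root) :
    (Fintype.card {ℓ : V ≃ Fin n // ∀ v, v ≠ root → ℓ (p v) < ℓ v} : ℚ)
      = (n.factorial : ℚ) /
          ∏ v : V, ((Finset.univ.filter fun u => ∃ m, p^[m] u = v).card : ℚ) :=
  stmt8_general n hcard root p hroot hreach
end

section
/- Let r ≥ 2 and let k_1, …, k_r be variables with K = k_1 + ⋯ + k_r. Define P(k_1,…,k_r) = Σ_{X_1 ⊔ X_2 = {3,…,r}} k_1 · (k_1 + K_{X_1} − 1)_{|X_1| − 1} · (k_2 + K_{X_2} − 1)_{|X_2|}, where the sum is over all ordered pairs (X_1, X_2) of disjoint (possibly empty) sets with union {3,…,r}, K_X = Σ_{u ∈ X} k_u, and the summand with X_1 = ∅ is interpreted (via the convention (a)_{−1} = 1/(a+1), which cancels the factor k_1) as (k_2 + K_{{3,…,r}} − 1)_{r−2}. Then P(k_1,…,k_r) = (K − 1)_{r−2}, as an identity in ℚ[k_1,…,k_r]. -/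
/-- The falling factorial `(a)_m = a(a−1)⋯(a−m+1)`, for `m ≥ 0` (with `(a)_0 = 1`). -/
def ffall {R : Type*} [CommRing R] (a : R) (m : ℕ) : R :=
  ∏ i ∈ Finset.range m, (a - (i : R))

/-- The polynomial
`P(k_1, …, k_s) = Σ_{X₁ ⊔ X₂ = {3,…,s}} k_1 · (k_1 + K_{X₁} − 1)_{|X₁|−1} · (k_2 + K_{X₂} − 1)_{|X₂|}`,
where the sum is over all ordered pairs of disjoint (possibly empty) sets with union
`{3, …, s}`, `K_X = Σ_{u ∈ X} k_u`, and the summand with `X₁ = ∅` is interpreted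
(via the convention `(a)_{−1} = 1/(a+1)`, cancelling the factor `k_1`) as
`(k_2 + K_{{3,…,s}} − 1)_{s−2}`. The variables are fed in as a function `k : ℕ → R`. -/
def Pfun {R : Type*} [CommRing R] (s : ℕ) (k : ℕ → R) : R :=
  ∑ X₁ ∈ (Finset.Icc 3 s).powerset,
    if X₁ = ∅ then ffall (k 2 + (∑ u ∈ Finset.Icc 3 s, k u) - 1) (s - 2)
    else
      k 1 * ffall (k 1 + (∑ u ∈ X₁, k u) - 1) (X₁.card - 1) *
        ffall (k 2 + (∑ u ∈ Finset.Icc 3 s \ X₁, k u) - 1) (Finset.Icc 3 s \ X₁).card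

section Aux

variable {R : Type*} [CommRing R]

lemma ffall_succ_front (a : R) (m : ℕ) :
    ffall a (m + 1) = a * ffall (a - 1) m := by
  unfold ffall
  rw [Finset.prod_range_succ', mul_comm]
  simp only [Nat.cast_zero, sub_zero]
  congr 1
  refine Finset.prod_congr rfl fun i _ => ?_
  push_cast
  ring

/-- `Q_U(y) = (y + K_U − 1)_{|U|}`. -/
def Qf (k : ℕ → R) (U : Finset ℕ) (y : R) : R :=
  ffall (y + (∑ u ∈ U, k u) - 1) U.card

/-- `P_T(x) = x (x + K_T − 1)_{|T|−1}` for nonempty `T`, `1` for `T = ∅`. -/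
def Pf (k : ℕ → R) (T : Finset ℕ) (x : R) : R :=
  if T = ∅ then 1 else x * ffall (x + (∑ u ∈ T, k u) - 1) (T.card - 1)

lemma Qf_insert (k : ℕ → R) {a : ℕ} {U : Finset ℕ} (ha : a ∉ U) (y : R) :
    Qf k (insert a U) y
      = (y + k a + (∑ u ∈ U, k u) - 1) * Qf k U (y + k a - 1) := by
  unfold Qf
  rw [Finset.card_insert_of_notMem ha, Finset.sum_insert ha, ffall_succ_front]
  congr 2 <;> ring

lemma Pf_insert (k : ℕ → R) {a : ℕ} {T : Finset ℕ} (ha : a ∉ T) (x : R) :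
    Pf k (insert a T) x = x * Qf k T (x + k a) := by
  unfold Pf Qf
  rw [if_neg (Finset.insert_ne_empty a T), Finset.card_insert_of_notMem ha,
    Finset.sum_insert ha]
  simp only [Nat.add_sub_cancel]
  congr 2
  ring

lemma Pf_mul (k : ℕ → R) (T : Finset ℕ) (x : R) :
    (x + ∑ u ∈ T, k u) * Pf k T x = x * Qf k T (x + 1) := by
  unfold Pf Qf
  by_cases hT : T = ∅
  · subst hT
    simp [ffall]
  · rw [if_neg hT]
    obtain ⟨m, hm⟩ : ∃ m, T.card = m + 1 :=
      ⟨T.card - 1, (Nat.succ_pred_eq_of_pos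
        (Finset.card_pos.mpr (Finset.nonempty_of_ne_empty hT))).symm⟩
    rw [hm]
    simp only [Nat.add_sub_cancel]
    rw [ffall_succ_front]
    have h1 : x + 1 + (∑ u ∈ T, k u) - 1 = x + ∑ u ∈ T, k u := by ring
    rw [h1]
    ring

/-- Reindexing: pairs `W ⊆ T ⊆ s` correspond to `(W, U)` with `W ⊆ s`, `U ⊆ s \ W`. -/
lemma powerset_swap1 [AddCommMonoid M] (s : Finset ℕ) (F : Finset ℕ → Finset ℕ → M) :
    ∑ T ∈ s.powerset, ∑ W ∈ T.powerset, F W (T \ W)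
      = ∑ W ∈ s.powerset, ∑ U ∈ (s \ W).powerset, F W U := by
  rw [Finset.sum_comm' (t' := s.powerset)
    (s' := fun W => s.powerset.filter (fun T => W ⊆ T))]
  · refine Finset.sum_congr rfl fun W hW => ?_
    rw [Finset.mem_powerset] at hW
    refine Finset.sum_nbij' (fun T => T \ W) (fun U => W ∪ U) ?_ ?_ ?_ ?_ ?_
    · intro T hT
      rw [Finset.mem_filter, Finset.mem_powerset] at hT
      rw [Finset.mem_powerset]
      exact Finset.sdiff_subset_sdiff hT.1 (le_refl W)
    · intro U hU
      rw [Finset.mem_powerset, Finset.subset_sdiff] at hU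
      rw [Finset.mem_filter, Finset.mem_powerset]
      exact ⟨Finset.union_subset hW hU.1, Finset.subset_union_left⟩
    · intro T hT
      rw [Finset.mem_filter] at hT
      exact Finset.union_sdiff_of_subset hT.2
    · intro U hU
      rw [Finset.mem_powerset, Finset.subset_sdiff] at hU
      exact Finset.union_sdiff_cancel_left hU.2.symm
    · intro T _
      rfl
  · intro T W
    simp only [Finset.mem_powerset, Finset.mem_filter]
    constructor
    · rintro ⟨h1, h2⟩
      exact ⟨⟨h1, h2⟩, h2.trans h1⟩
    · rintro ⟨⟨h1, h2⟩, _⟩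
      exact ⟨h1, h2⟩

/-- Symmetry of sums over pairs of disjoint subsets. -/
lemma powerset_swap2 [AddCommMonoid M] (s : Finset ℕ) (F : Finset ℕ → Finset ℕ → M) :
    ∑ T ∈ s.powerset, ∑ W ∈ (s \ T).powerset, F T W
      = ∑ W ∈ s.powerset, ∑ T ∈ (s \ W).powerset, F T W := by
  refine Finset.sum_comm' ?_
  intro T W
  simp only [Finset.mem_powerset, Finset.subset_sdiff]
  constructor
  · rintro ⟨h1, h2, h3⟩
    exact ⟨⟨h1, h3.symm⟩, h2⟩
  · rintro ⟨⟨h1, h2⟩, h3⟩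
    exact ⟨h1, h3, h2.symm⟩

end Aux

section Main

variable {R : Type*} [CommRing R]

/-- The falling-factorial Hurwitz identity:
`∑_{T ⊆ S} P_T(x) Q_{S∖T}(y) = (x + y + K_S − 1)_{|S|}`. -/
lemma hurwitz_ffall (k : ℕ → R) (S : Finset ℕ) : ∀ x y : R,
    ∑ T ∈ S.powerset, Pf k T x * Qf k (S \ T) y
      = ffall (x + y + (∑ u ∈ S, k u) - 1) S.card := by
  induction S using Finset.strongInduction with
  | _ S IH =>
  intro x y
  rcases S.eq_empty_or_nonempty with rfl | ⟨a, ha⟩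
  · simp [Pf, Qf, ffall]
  · have haS' : a ∉ S.erase a := Finset.notMem_erase a S
    have hins : insert a (S.erase a) = S := Finset.insert_erase ha
    set S' := S.erase a with hS'def
    have hS'ss : S' ⊂ S := Finset.erase_ssubset ha
    have hsubS : ∀ {T : Finset ℕ}, T ⊆ S' → T ⊂ S := fun {T} hT =>
      lt_of_le_of_lt (Finset.le_iff_subset.mpr hT) hS'ss
    have hsplit :
        ∑ T ∈ S.powerset, Pf k T x * Qf k (S \ T) y
          = (∑ T ∈ S'.powerset,
              Pf k T x * ((y + k a + (∑ u ∈ S' \ T, k u) - 1) * Qf k (S' \ T) (y + k a - 1)))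
            + ∑ T ∈ S'.powerset, (x * Qf k T (x + k a)) * Qf k (S' \ T) y := by
      rw [← hins, Finset.sum_powerset_insert haS']
      congr 1
      · refine Finset.sum_congr rfl fun T hT => ?_
        rw [Finset.mem_powerset] at hT
        have haT : a ∉ T := fun h => haS' (hT h)
        rw [Finset.insert_sdiff_of_notMem S' haT,
          Qf_insert k (fun h => haS' (Finset.sdiff_subset h)) y]
      · refine Finset.sum_congr rfl fun T hT => ?_
        rw [Finset.mem_powerset] at hT
        have haT : a ∉ T := fun h => haS' (hT h)
        have h2 : insert a S' \ insert a T = S' \ T := by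
          ext b
          simp only [Finset.mem_sdiff, Finset.mem_insert, not_or]
          constructor
          · rintro ⟨hb | hb, hba, hbT⟩
            · exact absurd hb hba
            · exact ⟨hb, hbT⟩
          · rintro ⟨hb, hbT⟩
            exact ⟨Or.inr hb, fun h => haS' (h ▸ hb), hbT⟩
        rw [h2, Pf_insert k haT x]
    have hRHS :
        ffall (x + y + (∑ u ∈ S, k u) - 1) S.card
          = (∑ T ∈ S'.powerset,
              Pf k T x * ((y + k a + (∑ u ∈ S' \ T, k u) - 1) * Qf k (S' \ T) (y + k a - 1)))
            + ∑ T ∈ S'.powerset, (x * Qf k T (x + 1)) * Qf k (S' \ T) (y + k a - 1) := by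
      have hcard : S.card = S'.card + 1 := by
        rw [← hins, Finset.card_insert_of_notMem haS']
      have hsum : (∑ u ∈ S, k u) = k a + ∑ u ∈ S', k u := by
        rw [← hins, Finset.sum_insert haS']
      rw [hcard, hsum, ffall_succ_front]
      have harg : x + y + (k a + ∑ u ∈ S', k u) - 1 - 1
          = x + (y + k a - 1) + (∑ u ∈ S', k u) - 1 := by ring
      rw [harg, ← IH S' hS'ss x (y + k a - 1), Finset.mul_sum, ← Finset.sum_add_distrib]
      refine Finset.sum_congr rfl fun T hT => ?_
      rw [Finset.mem_powerset] at hT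
      have hk : (∑ u ∈ S' \ T, k u) + ∑ u ∈ T, k u = ∑ u ∈ S', k u := Finset.sum_sdiff hT
      have hp := Pf_mul k T x
      linear_combination (Qf k (S' \ T) (y + k a - 1)) * hp
        - (Pf k T x * Qf k (S' \ T) (y + k a - 1)) * hk
    have hBC : ∑ T ∈ S'.powerset, (x * Qf k T (x + k a)) * Qf k (S' \ T) y
        = ∑ T ∈ S'.powerset, (x * Qf k T (x + 1)) * Qf k (S' \ T) (y + k a - 1) := by
      calc ∑ T ∈ S'.powerset, (x * Qf k T (x + k a)) * Qf k (S' \ T) y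
          = ∑ T ∈ S'.powerset, ∑ W ∈ T.powerset,
              (x * (Pf k W (k a - 1) * Qf k (T \ W) (x + 1))) * Qf k (S' \ T) y := by
            refine Finset.sum_congr rfl fun T hT => ?_
            rw [Finset.mem_powerset] at hT
            have hQ : Qf k T (x + k a)
                = ∑ W ∈ T.powerset, Pf k W (k a - 1) * Qf k (T \ W) (x + 1) := by
              rw [IH T (hsubS hT) (k a - 1) (x + 1)]
              unfold Qf
              congr 1
              ring
            rw [hQ, Finset.mul_sum, Finset.sum_mul]
        _ = ∑ T ∈ S'.powerset, ∑ W ∈ T.powerset,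
              (x * (Pf k W (k a - 1) * Qf k (T \ W) (x + 1)))
                * Qf k (S' \ (W ∪ (T \ W))) y := by
            refine Finset.sum_congr rfl fun T hT => Finset.sum_congr rfl fun W hW => ?_
            rw [Finset.mem_powerset] at hW
            rw [Finset.union_sdiff_of_subset hW]
        _ = ∑ W ∈ S'.powerset, ∑ U ∈ (S' \ W).powerset,
              (x * (Pf k W (k a - 1) * Qf k U (x + 1))) * Qf k (S' \ (W ∪ U)) y :=
            powerset_swap1 S' (fun W U =>
              (x * (Pf k W (k a - 1) * Qf k U (x + 1))) * Qf k (S' \ (W ∪ U)) y)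
        _ = ∑ W ∈ S'.powerset, ∑ U ∈ (S' \ W).powerset,
              (x * Qf k U (x + 1)) * (Pf k W (k a - 1) * Qf k ((S' \ U) \ W) y) := by
            refine Finset.sum_congr rfl fun W hW => Finset.sum_congr rfl fun U hU => ?_
            have hss : (S' \ U) \ W = S' \ (W ∪ U) := by
              ext b
              simp only [Finset.mem_sdiff, Finset.mem_union, not_or]
              tauto
            rw [hss]
            ring
        _ = ∑ T ∈ S'.powerset, ∑ W ∈ (S' \ T).powerset,
              (x * Qf k T (x + 1)) * (Pf k W (k a - 1) * Qf k ((S' \ T) \ W) y) :=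
            (powerset_swap2 S' (fun T W =>
              (x * Qf k T (x + 1)) * (Pf k W (k a - 1) * Qf k ((S' \ T) \ W) y))).symm
        _ = ∑ T ∈ S'.powerset, (x * Qf k T (x + 1)) * Qf k (S' \ T) (y + k a - 1) := by
            refine Finset.sum_congr rfl fun T hT => ?_
            rw [Finset.mem_powerset] at hT
            have hQ : Qf k (S' \ T) (y + k a - 1)
                = ∑ W ∈ (S' \ T).powerset, Pf k W (k a - 1) * Qf k ((S' \ T) \ W) y := by
              rw [IH (S' \ T) (hsubS Finset.sdiff_subset) (k a - 1) y]
              unfold Qf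
              congr 1
              ring
            rw [hQ, Finset.mul_sum]
    rw [hsplit, hRHS, hBC]

end Main

/-- For `r ≥ 2`, `P(k_1, …, k_r) = (K − 1)_{r−2}` where `K = k_1 + ⋯ + k_r`,
as an identity in `ℚ[k_1, …, k_r]` (the variable `i` is `k_i`). -/
theorem stmt12 (r : ℕ) (hr : 2 ≤ r) :
    Pfun r (fun i => (MvPolynomial.X i : MvPolynomial ℕ ℚ))
      = ffall ((∑ i ∈ Finset.Icc 1 r, (MvPolynomial.X i : MvPolynomial ℕ ℚ)) - 1) (r - 2) := by
  set k : ℕ → MvPolynomial ℕ ℚ := fun i => MvPolynomial.X i with hk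
  have hcard : (Finset.Icc 3 r).card = r - 2 := by
    rw [Nat.card_Icc]
    omega
  have hP : Pfun r k
      = ∑ T ∈ (Finset.Icc 3 r).powerset, Pf k T (k 1) * Qf k (Finset.Icc 3 r \ T) (k 2) := by
    unfold Pfun
    refine Finset.sum_congr rfl fun T hT => ?_
    by_cases hTe : T = ∅
    · subst hTe
      rw [if_pos rfl]
      unfold Pf Qf
      rw [if_pos rfl, one_mul, Finset.sdiff_empty, hcard]
    · rw [if_neg hTe]
      unfold Pf Qf
      rw [if_neg hTe]
  rw [hP, hurwitz_ffall k (Finset.Icc 3 r) (k 1) (k 2), hcard]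
  have h2m : (2 : ℕ) ∉ Finset.Icc 3 r := by
    simp [Finset.mem_Icc]
  have h1m : (1 : ℕ) ∉ insert 2 (Finset.Icc 3 r) := by
    simp [Finset.mem_Icc]
  have hIcc : Finset.Icc 1 r = insert 1 (insert 2 (Finset.Icc 3 r)) := by
    ext b
    simp only [Finset.mem_Icc, Finset.mem_insert]
    omega
  rw [hIcc, Finset.sum_insert h1m, Finset.sum_insert h2m]
  congr 1
  ring
end

section
/- Let r ≥ 2 and for each s ≥ 2 define the polynomial P(k_1,…,k_s) = Σ_{X_1 ⊔ X_2 = {3,…,s}} k_1 · (k_1 + K_{X_1} − 1)_{|X_1| − 1} · (k_2 + K_{X_2} − 1)_{|X_2|}, where the sum is over ordered pairs of disjoint sets with union {3,…,s}, K_X = Σ_{u ∈ X} k_u, and the X_1 = ∅ summand is interpreted as (k_2 + K_{{3,…,s}} − 1)_{s−2}. Then P satisfies the finite difference equation P(k_1 + 1, k_2, …, k_r) − P(k_1, k_2, …, k_r) = Σ_{i=3}^{r} P(k_1 + k_i, k_2, …, k_{i−1}, k_{i+1}, …, k_r), where on the right-hand side P is the corresponding polynomial in r − 1 variables evaluated at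 the listed arguments (the variable k_i omitted and k_1 replaced by k_1 + k_i). -/
open Finset

section FallingFactorial

variable {R : Type*} [CommRing R]

@[simp]
lemma ffall_zero (a : R) : ffall a 0 = 1 :=
  prod_range_zero _

lemma ffall_succ (a : R) (m : ℕ) : ffall a (m + 1) = ffall a m * (a - m) :=
  prod_range_succ _ _

lemma ffall_add_one_succ (a : R) (m : ℕ) : ffall (a + 1) (m + 1) = (a + 1) * ffall a m := by
  rw [ffall, prod_range_succ', Nat.cast_zero, sub_zero, mul_comm]
  congr 1
  exact prod_congr rfl fun i _ => by push_cast; ring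

lemma add_one_mul_ffall_sub_mul_ffall (a c : R) (n : ℕ) :
    (a + 1) * ffall (a + c) (n + 1) - a * ffall (a + c - 1) (n + 1)
      = ((n + 2) * a + c) * ffall (a + c - 1) n := by
  have h := ffall_add_one_succ (a + c - 1) n
  rw [sub_add_cancel] at h
  rw [h, ffall_succ]
  ring

end FallingFactorial

theorem Finset.sum_powerset_sum_erase {α M : Type*} [DecidableEq α] [AddCommMonoid M]
    (S : Finset α) (f : α → Finset α → M) :
    ∑ X ∈ S.powerset, ∑ i ∈ X, f i (X.erase i) = ∑ i ∈ S, ∑ Y ∈ (S.erase i).powerset, f i Y := by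
  rw [sum_comm' (t' := S) (s' := fun i => {X ∈ S.powerset | i ∈ X})]
  · refine sum_congr rfl fun i hi => ?_
    rw [sum_filter]
    conv_lhs => rw [← insert_erase hi]
    have hi' : ∀ t ∈ (S.erase i).powerset, i ∉ t := fun t ht =>
      notMem_of_mem_powerset_of_notMem ht (notMem_erase i S)
    rw [sum_powerset_insert (notMem_erase i S)]
    simp only [mem_insert_self, if_true, erase_insert_eq_erase]
    rw [sum_eq_zero fun t ht => if_neg (hi' t ht), zero_add]
    exact sum_congr rfl fun t ht => by rw [erase_eq_of_notMem (hi' t ht)]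
  · intro X i
    simp only [mem_powerset, mem_filter]
    exact ⟨fun ⟨hX, hi⟩ => ⟨⟨hX, hi⟩, hX hi⟩, fun ⟨h, _⟩ => h⟩

section Psum

variable {R ι κ : Type*} [CommRing R] [DecidableEq ι] [DecidableEq κ]

/-- The summand of `Pfun` indexed by `X₁ = X`, with `k 1` and `k 2` passed separately as `a` and
`b`, and with `{3, …, s}` replaced by an arbitrary finite index set `S`. -/
def Pterm (a b : R) (S : Finset ι) (k : ι → R) (X : Finset ι) : R :=
  if X = ∅ then ffall (b + (∑ u ∈ S, k u) - 1) #S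
  else a * ffall (a + (∑ u ∈ X, k u) - 1) (#X - 1) * ffall (b + (∑ u ∈ S \ X, k u) - 1) #(S \ X)

def Psum (a b : R) (S : Finset ι) (k : ι → R) : R :=
  ∑ X ∈ S.powerset, Pterm a b S k X

lemma Psum_congr (a b : R) (S : Finset ι) {k k' : ι → R} (h : ∀ u ∈ S, k u = k' u) :
    Psum a b S k = Psum a b S k' := by
  refine sum_congr rfl fun X hX => ?_
  rw [Pterm, Pterm, sum_congr rfl h, sum_congr rfl fun u hu => h u (mem_powerset.1 hX hu),
    sum_congr rfl fun u hu => h u (sdiff_subset hu)]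

lemma Psum_map (a b : R) (S : Finset ι) (f : ι ↪ κ) (k : κ → R) :
    Psum a b (S.map f) k = Psum a b S (k ∘ f) := by
  rw [Psum, Psum, map_eq_image, powerset_image, sum_image]
  · refine sum_congr rfl fun X _ => ?_
    simp [Pterm, ← map_eq_image, ← Finset.map_sdiff]
  · exact fun X _ Y _ h => image_injective f.injective h

lemma Pterm_erase_of_card_eq (a b : R) (S : Finset ι) (k : ι → R) {X : Finset ι} {i : ι}
    (hi : i ∈ X) {n : ℕ} (hX : #X = n + 2) :
    Pterm (a + k i) b (S.erase i) k (X.erase i)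
      = (a + k i) * ffall (a + (∑ u ∈ X, k u) - 1) n *
          ffall (b + (∑ u ∈ S \ X, k u) - 1) #(S \ X) := by
  have hcard : #(X.erase i) = n + 1 := by rw [card_erase_of_mem hi, hX]; rfl
  have hne : X.erase i ≠ ∅ := nonempty_iff_ne_empty.1 (card_pos.1 (by omega))
  have hsdiff : S.erase i \ X.erase i = S \ X := by
    ext u; simp only [mem_sdiff, mem_erase]; grind
  rw [Pterm, if_neg hne, hcard, sum_erase_eq_sub hi, hsdiff, Nat.add_sub_cancel,
    add_add_sub_cancel]

lemma Pterm_add_one_sub (a b : R) (S : Finset ι) (k : ι → R) (X : Finset ι) :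
    Pterm (a + 1) b S k X - Pterm a b S k X
      = ∑ i ∈ X, Pterm (a + k i) b (S.erase i) k (X.erase i) := by
  rcases hX : #X with _ | _ | n
  · rw [card_eq_zero] at hX
    simp [hX, Pterm]
  · obtain ⟨i, rfl⟩ := card_eq_one.1 hX
    simp only [Pterm, singleton_ne_empty, ↓reduceIte, sum_singleton, card_singleton, tsub_self,
      ffall_zero, mul_one, sdiff_singleton_eq_erase, erase_singleton]
    ring
  · have hne : X ≠ ∅ := nonempty_iff_ne_empty.1 (card_pos.1 (by omega))
    rw [sum_congr rfl fun i hi => Pterm_erase_of_card_eq a b S k hi hX, ← sum_mul, ← sum_mul,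
      sum_add_distrib, sum_const, hX, Pterm, Pterm, if_neg hne, if_neg hne, hX, Nat.add_sub_cancel,
      show a + 1 + (∑ u ∈ X, k u) - 1 = a + ∑ u ∈ X, k u by ring, ← sub_mul,
      add_one_mul_ffall_sub_mul_ffall, nsmul_eq_mul]
    push_cast
    ring

lemma Psum_add_one_sub (a b : R) (S : Finset ι) (k : ι → R) :
    Psum (a + 1) b S k - Psum a b S k = ∑ i ∈ S, Psum (a + k i) b (S.erase i) k := by
  simp only [Psum]
  rw [← sum_sub_distrib,
    ← sum_powerset_sum_erase S fun i Y => Pterm (a + k i) b (S.erase i) k Y]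
  exact sum_congr rfl fun X _ => Pterm_add_one_sub a b S k X

end Psum

lemma Pfun_eq_Psum {R : Type*} [CommRing R] (s : ℕ) (k : ℕ → R) :
    Pfun s k = Psum (k 1) (k 2) (Icc 3 s) k := by
  rw [Pfun, Psum]
  refine sum_congr rfl fun X _ => ?_
  rw [Pterm, Nat.card_Icc, show s + 1 - 3 = s - 2 by omega]

@[simps]
def skipEmbedding (i : ℕ) : ℕ ↪ ℕ :=
  ⟨fun j => if j < i then j else j + 1, fun a b h => by dsimp only at h; split_ifs at h <;> omega⟩

lemma map_skipEmbedding_Icc {a n i : ℕ} (hai : a ≤ i) (hin : i ≤ n + 1) :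
    (Icc a n).map (skipEmbedding i) = (Icc a (n + 1)).erase i := by
  ext j
  simp only [mem_map, mem_Icc, mem_erase, skipEmbedding_apply]
  constructor
  · rintro ⟨x, hx, rfl⟩
    split_ifs <;> omega
  · intro hj
    exact ⟨if j < i then j else j - 1, by split_ifs <;> omega, by split_ifs <;> omega⟩

theorem stmt13_general (r : ℕ) :
    Pfun r (fun i => if i = 1 then MvPolynomial.X 1 + 1 else (MvPolynomial.X i : MvPolynomial ℕ ℚ))
        - Pfun r (fun i => MvPolynomial.X i)
      = ∑ i ∈ Finset.Icc 3 r,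
          Pfun (r - 1) (fun j =>
            if j = 1 then MvPolynomial.X 1 + MvPolynomial.X i
            else if j < i then MvPolynomial.X j else MvPolynomial.X (j + 1)) := by
  have hk : ∀ u ∈ Icc 3 r,
      (if u = 1 then MvPolynomial.X 1 + 1 else MvPolynomial.X u : MvPolynomial ℕ ℚ) =
        MvPolynomial.X u :=
    fun u hu => if_neg (by grind)
  rw [Pfun_eq_Psum, Pfun_eq_Psum, Psum_congr _ _ _ hk, if_pos rfl, if_neg (by norm_num),
    Psum_add_one_sub]
  refine sum_congr rfl fun i hi => ?_
  obtain ⟨n, rfl⟩ : ∃ n, r = n + 1 := ⟨r - 1, by grind⟩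
  rw [mem_Icc] at hi
  rw [Nat.add_sub_cancel, Pfun_eq_Psum, ← map_skipEmbedding_Icc hi.1 hi.2, Psum_map]
  simp only [if_neg (show (2 : ℕ) ≠ 1 by norm_num), if_pos (show 2 < i by omega)]
  refine Psum_congr _ _ _ fun j hj => ?_
  simp only [mem_Icc] at hj
  rw [Function.comp_apply, skipEmbedding_apply, if_neg (show j ≠ 1 by omega)]
  exact apply_ite _ _ _ _

/-- The finite difference equation for `P`: for `r ≥ 2`,
`P(k_1 + 1, k_2, …, k_r) − P(k_1, …, k_r) = Σ_{i=3}^{r} P(k_1 + k_i, k_2, …, k̂_i, …, k_r)`,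
where on the right-hand side `P` is the corresponding polynomial in `r − 1` variables,
with `k_i` omitted and `k_1` replaced by `k_1 + k_i` (so the `j`-th argument is
`k_1 + k_i` for `j = 1`, `k_j` for `2 ≤ j ≤ i − 1`, and `k_{j+1}` for `i ≤ j ≤ r − 1`).
This is an identity in `ℚ[k_1, …, k_r]` (the variable `i` is `k_i`). -/
theorem stmt13 (r : ℕ) (hr : 2 ≤ r) :
    Pfun r (fun i => if i = 1 then MvPolynomial.X 1 + 1 else (MvPolynomial.X i : MvPolynomial ℕ ℚ))
        - Pfun r (fun i => MvPolynomial.X i)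
      = ∑ i ∈ Finset.Icc 3 r,
          Pfun (r - 1) (fun j =>
            if j = 1 then MvPolynomial.X 1 + MvPolynomial.X i
            else if j < i then MvPolynomial.X j else MvPolynomial.X (j + 1)) :=
  stmt13_general r
end
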